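/- arXiv:1507.04465 — 8 statements merged into one kernel-verified Lean document; each statement's English description precedes it below -/
import Mathlib

section
/- Let m, n be integers with 1 ≤ m ≤ n, and let π ∈ S_n be chosen uniformly at random. Then 1/(2m) ≤ P(π has no cycle of length < m) ≤ 1/m. -/
open scoped BigOperators

noncomputable section

/-- `π` has no cycle of length `< m`: the cycle containing each point `x` (whose length is
the minimal period of `π` at `x`, fixed points having period 1) has length at least `m`. -/
def NoShortCycle {n : ℕ} (m : ℕ) (π : Equiv.Perm (Fin n)) : Prop :=
  ∀ x : Fin n, m ≤ Function.minimalPeriod (⇑π) x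

/-!
Let `q n` be the proportion of permutations of `n` points all of whose cycles have length at
least `m`. Sorting them by the length `k` of the cycle through a chosen point `x₀`: that cycle is
given by the `(n - 1)! / (n - k)!` ordered choices of its other points, and the rest is such a
permutation of the remaining `n - k` points. Hence `n * q n = q 0 + ⋯ + q (n - m)`, where
`q 0 = 1` and `q i = 0` for `0 < i < m`. For `n ≥ m` the right-hand side is `1` plus
`c = (n + 1 - 2m)⁺` terms which, by strong induction, lie in `[1 / (2m), 1 / m]`, and
`m + c ≤ n ≤ 2m + c` gives both bounds.
-/

open Equiv Function

theorem Function.Semiconj.minimalPeriod_apply_eq {α β : Type*} {fa : α → α} {fb : β → β}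
    {g : α → β} (h : Semiconj g fa fb) (hg : Injective g) (x : α) :
    minimalPeriod fb (g x) = minimalPeriod fa x :=
  minimalPeriod_eq_minimalPeriod_iff.2 fun n => by
    rw [IsPeriodicPt, IsFixedPt, ← (h.iterate_right n) x, hg.eq_iff]; rfl

theorem List.Nodup.minimalPeriod_formPerm {α : Type*} [DecidableEq α] {l : List α}
    (hl : l.Nodup) {x : α} (hx : x ∈ l) : minimalPeriod l.formPerm x = l.length := by
  have hcyc : l.formPerm.IsCycleOn (l.toFinset : Set α) := by
    simpa only [List.coe_toFinset] using hl.isCycleOn_formPerm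
  rw [← List.toFinset_card_of_nodup hl, ← Nat.dvd_right_iff_eq]
  intro n
  rw [← isPeriodicPt_iff_minimalPeriod_dvd, ← hcyc.pow_apply_eq (List.mem_toFinset.2 hx),
    IsPeriodicPt, IsFixedPt, Perm.coe_pow]

namespace Equiv.Perm

variable {α β : Type*}

def CyclesAtLeast (m : ℕ) (π : Perm α) : Prop :=
  ∀ x, m ≤ minimalPeriod π x

theorem cyclesAtLeast_permCongr_iff {m : ℕ} (e : α ≃ β) (π : Perm α) :
    CyclesAtLeast m (e.permCongr π) ↔ CyclesAtLeast m π := by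
  have hconj : Semiconj e π (e.permCongr π) := fun x => by simp [permCongr_apply]
  rw [CyclesAtLeast, ← e.forall_congr_right]
  simp only [hconj.minimalPeriod_apply_eq e.injective, CyclesAtLeast]

theorem natCard_cyclesAtLeast_congr (m : ℕ) (e : α ≃ β) :
    Nat.card {π : Perm α // CyclesAtLeast m π} = Nat.card {π : Perm β // CyclesAtLeast m π} :=
  Nat.card_congr <| e.permCongr.subtypeEquiv fun π => (cyclesAtLeast_permCongr_iff e π).symm

def cyclesAtLeastCount (m n : ℕ) : ℕ :=
  Nat.card {π : Perm (Fin n) // CyclesAtLeast m π}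

theorem natCard_cyclesAtLeast (m : ℕ) (α : Type*) [Finite α] :
    Nat.card {π : Perm α // CyclesAtLeast m π} = cyclesAtLeastCount m (Nat.card α) :=
  natCard_cyclesAtLeast_congr m (Finite.equivFin α)

theorem cyclesAtLeastCount_zero (m : ℕ) : cyclesAtLeastCount m 0 = 1 :=
  have : Nonempty {π : Perm (Fin 0) // CyclesAtLeast m π} := ⟨1, fun x => x.elim0⟩
  Nat.card_unique

theorem cyclesAtLeastCount_eq_zero {m n : ℕ} (hn : 0 < n) (hnm : n < m) :
    cyclesAtLeastCount m n = 0 := by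
  refine Nat.card_eq_zero.2 (Or.inl ⟨fun π => ?_⟩)
  have := π.2 ⟨0, hn⟩
  have := (minimalPeriod_le_card (f := π.1) (x := ⟨0, hn⟩)).trans_eq (Fintype.card_fin n)
  omega

section CycleThrough

variable {π : Perm α} {x₀ : α} {j : ℕ}

variable (x₀) in
def cycleListThrough (f : Fin j ↪ {x // x ≠ x₀}) : List α :=
  x₀ :: List.ofFn fun i => (f i : α)

theorem length_cycleListThrough (f : Fin j ↪ {x // x ≠ x₀}) :
    (cycleListThrough x₀ f).length = j + 1 := by
  simp [cycleListThrough]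

theorem nodup_cycleListThrough (f : Fin j ↪ {x // x ≠ x₀}) : (cycleListThrough x₀ f).Nodup := by
  refine List.nodup_cons.2
    ⟨fun hx => ?_, List.nodup_ofFn.2 (Subtype.val_injective.comp f.injective)⟩
  obtain ⟨i, hi⟩ := List.mem_ofFn.1 hx
  exact (f i).2 hi

variable (π x₀) in
def orbitTail (h : minimalPeriod π x₀ = j + 1) : Fin j ↪ {x // x ≠ x₀} where
  toFun i := ⟨(π ^ (i + 1 : ℕ)) x₀, by
    rw [← iterate_eq_pow]
    exact not_isPeriodicPt_of_pos_of_lt_minimalPeriod (Nat.succ_ne_zero i)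
      (h ▸ Nat.succ_lt_succ i.2)⟩
  inj' a b hab := by
    have hab' : π^[a + 1] x₀ = π^[b + 1] x₀ := by
      simpa only [iterate_eq_pow, Subtype.mk.injEq] using hab
    rw [iterate_eq_iterate_iff_of_lt_minimalPeriod (h ▸ Nat.succ_lt_succ a.2)
      (h ▸ Nat.succ_lt_succ b.2)] at hab'
    exact Fin.ext (Nat.succ_injective hab')

@[simp]
theorem coe_orbitTail_apply (h : minimalPeriod π x₀ = j + 1) (i : Fin j) :
    (orbitTail π x₀ h i : α) = (π ^ (i + 1 : ℕ)) x₀ :=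
  rfl

theorem getElem_cycleListThrough_orbitTail (h : minimalPeriod π x₀ = j + 1) (k : ℕ)
    (hk : k < (cycleListThrough x₀ (orbitTail π x₀ h)).length) :
    (cycleListThrough x₀ (orbitTail π x₀ h))[k] = (π ^ k) x₀ := by
  cases k with
  | zero => rfl
  | succ k => simp [cycleListThrough]

end CycleThrough

section CycleList

variable [DecidableEq α] {l : List α} {π : Perm α} {x : α} {x₀ : α} {j : ℕ}

/-- For `l` without duplicates: `l` lists one cycle of `π`, in order. -/
def HasCycleList (π : Perm α) (l : List α) : Prop :=
  ∀ x ∈ l, π x = l.formPerm x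

theorem HasCycleList.pow_apply (h : HasCycleList π l) (hx : x ∈ l) (n : ℕ) :
    (π ^ n) x = (l.formPerm ^ n) x := by
  induction n generalizing x with
  | zero => rfl
  | succ n ih =>
    rw [pow_succ, pow_succ, mul_apply, mul_apply, h x hx, ih (List.formPerm_apply_mem_of_mem hx)]

theorem HasCycleList.minimalPeriod_of_mem (h : HasCycleList π l) (hl : l.Nodup) (hx : x ∈ l) :
    minimalPeriod π x = l.length := by
  rw [← hl.minimalPeriod_formPerm hx]
  refine minimalPeriod_eq_minimalPeriod_iff.2 fun n => ?_
  rw [IsPeriodicPt, IsFixedPt, IsPeriodicPt, IsFixedPt, ← coe_pow, ← coe_pow, h.pow_apply hx]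

theorem HasCycleList.apply_mem_iff (h : HasCycleList π l) : π x ∈ l ↔ x ∈ l := by
  refine ⟨fun hπx => ?_, fun hx => h x hx ▸ List.formPerm_apply_mem_of_mem hx⟩
  set z := l.formPerm.symm (π x)
  have hz : z ∈ l := List.formPerm_mem_iff_mem.1 (by rwa [apply_symm_apply])
  have hzx : z = x := π.injective (by rw [h z hz, apply_symm_apply])
  exact hzx ▸ hz

variable (l) in
def hasCycleListEquiv : {π : Perm α // HasCycleList π l} ≃ Perm {x // x ∉ l} where
  toFun π := π.1.subtypePerm fun _ => π.2.apply_mem_iff.not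
  invFun σ := ⟨l.formPerm * ofSubtype σ, by
    intro x hx
    rw [mul_apply, ofSubtype_apply_of_not_mem σ (a := x) (not_not.2 hx)]⟩
  left_inv π := by
    ext x
    by_cases hx : x ∈ l
    · rw [mul_apply, ofSubtype_apply_of_not_mem (p := (· ∉ l)) _ (not_not.2 hx), π.2 x hx]
    · rw [mul_apply, ofSubtype_apply_of_mem (p := (· ∉ l)) _ hx, subtypePerm_apply,
        List.formPerm_apply_of_notMem (π.2.apply_mem_iff.not.2 hx)]
  right_inv σ := Perm.ext fun x => Subtype.ext <| by
    change l.formPerm (ofSubtype σ x) = σ x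
    rw [ofSubtype_apply_of_mem σ x.2, List.formPerm_apply_of_notMem (σ x).2]

theorem HasCycleList.cyclesAtLeast_iff {m : ℕ} (h : HasCycleList π l) (hl : l.Nodup)
    (hm : m ≤ l.length) :
    CyclesAtLeast m π ↔ CyclesAtLeast m (hasCycleListEquiv l ⟨π, h⟩) := by
  have hconj : Semiconj Subtype.val (hasCycleListEquiv l ⟨π, h⟩) π := fun _ => rfl
  refine ⟨fun hπ y => (hπ y).trans_eq (hconj.minimalPeriod_apply_eq Subtype.val_injective y),
    fun hσ y => ?_⟩
  by_cases hy : y ∈ l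
  · exact hm.trans_eq (h.minimalPeriod_of_mem hl hy).symm
  · exact (hσ ⟨y, hy⟩).trans_eq (hconj.minimalPeriod_apply_eq Subtype.val_injective _).symm

theorem natCard_cyclesAtLeast_hasCycleList [Finite α] {m : ℕ} (hl : l.Nodup)
    (hm : m ≤ l.length) :
    Nat.card {π : Perm α // HasCycleList π l ∧ CyclesAtLeast m π} =
      cyclesAtLeastCount m (Nat.card α - l.length) := by
  have : Fintype α := Fintype.ofFinite α
  have e : {π : Perm α // HasCycleList π l ∧ CyclesAtLeast m π} ≃
      {σ : Perm {x // x ∉ l} // CyclesAtLeast m σ} :=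
    (Equiv.subtypeSubtypeEquivSubtypeInter (HasCycleList · l) (CyclesAtLeast m)).symm.trans <|
      (hasCycleListEquiv l).subtypeEquiv fun π => π.2.cyclesAtLeast_iff hl hm
  rw [Nat.card_congr e, natCard_cyclesAtLeast, Nat.card_eq_fintype_card,
    Fintype.card_subtype_compl, Nat.card_eq_fintype_card,
    Fintype.card_of_subtype l.toFinset fun _ => List.mem_toFinset, List.toFinset_card_of_nodup hl]

theorem HasCycleList.pow_succ_apply_eq {f : Fin j ↪ {x // x ≠ x₀}}
    (h : HasCycleList π (cycleListThrough x₀ f)) (i : Fin j) : (π ^ (i + 1 : ℕ)) x₀ = f i := by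
  rw [h.pow_apply List.mem_cons_self, cycleListThrough,
    List.formPerm_pow_apply_head _ _ (nodup_cycleListThrough f)]
  simp [Nat.mod_eq_of_lt (Nat.succ_lt_succ i.2)]

theorem HasCycleList.minimalPeriod_eq {f : Fin j ↪ {x // x ≠ x₀}}
    (h : HasCycleList π (cycleListThrough x₀ f)) : minimalPeriod π x₀ = j + 1 :=
  (h.minimalPeriod_of_mem (nodup_cycleListThrough f) List.mem_cons_self).trans
    (length_cycleListThrough f)

theorem hasCycleList_orbitTail (h : minimalPeriod π x₀ = j + 1) :
    HasCycleList π (cycleListThrough x₀ (orbitTail π x₀ h)) := by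
  intro y hy
  obtain ⟨k, hk, rfl⟩ := List.getElem_of_mem hy
  rw [List.formPerm_apply_getElem _ (nodup_cycleListThrough _), getElem_cycleListThrough_orbitTail,
    getElem_cycleListThrough_orbitTail, length_cycleListThrough, ← h, ← mul_apply, ← pow_succ',
    ← iterate_eq_pow, ← iterate_eq_pow, iterate_mod_minimalPeriod_eq]

theorem orbitTail_eq {f : Fin j ↪ {x // x ≠ x₀}} (hf : HasCycleList π (cycleListThrough x₀ f))
    (h : minimalPeriod π x₀ = j + 1) : orbitTail π x₀ h = f :=
  DFunLike.ext _ _ fun i => Subtype.ext (hf.pow_succ_apply_eq i)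

variable (x₀ j) in
def minimalPeriodEqEquiv (P : Perm α → Prop) :
    {π : Perm α // minimalPeriod π x₀ = j + 1 ∧ P π} ≃
      Σ f : Fin j ↪ {x // x ≠ x₀},
        {π : Perm α // HasCycleList π (cycleListThrough x₀ f) ∧ P π} where
  toFun π := ⟨orbitTail π.1 x₀ π.2.1, π.1, hasCycleList_orbitTail π.2.1, π.2.2⟩
  invFun p := ⟨p.2.1, p.2.2.1.minimalPeriod_eq, p.2.2.2⟩
  left_inv _ := rfl
  right_inv p := Sigma.subtype_ext (orbitTail_eq p.2.2.1 p.2.2.1.minimalPeriod_eq) rfl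

theorem natCard_minimalPeriod_eq_cyclesAtLeast [Finite α] {m : ℕ} (x₀ : α) (hm : m ≤ j + 1) :
    Nat.card {π : Perm α // minimalPeriod π x₀ = j + 1 ∧ CyclesAtLeast m π} =
      (Nat.card α - 1).descFactorial j * cyclesAtLeastCount m (Nat.card α - (j + 1)) := by
  have : Fintype α := Fintype.ofFinite α
  have hfiber (f : Fin j ↪ {x // x ≠ x₀}) :
      Nat.card {π : Perm α // HasCycleList π (cycleListThrough x₀ f) ∧ CyclesAtLeast m π} =
        cyclesAtLeastCount m (Nat.card α - (j + 1)) := by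
    rw [natCard_cyclesAtLeast_hasCycleList (nodup_cycleListThrough f)
      ((length_cycleListThrough f).symm ▸ hm), length_cycleListThrough]
  rw [Nat.card_congr (minimalPeriodEqEquiv x₀ j _), Nat.card_sigma]
  simp only [hfiber, Finset.sum_const, Finset.card_univ, smul_eq_mul, Fintype.card_embedding_eq,
    Fintype.card_fin, Fintype.card_subtype_compl, Fintype.card_unique, Nat.card_eq_fintype_card]

end CycleList

theorem cyclesAtLeastCount_eq_sum {m n : ℕ} (hm : 1 ≤ m) (hn : 0 < n) :
    cyclesAtLeastCount m n = ∑ i ∈ Finset.range (n + 1 - m),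
      (n - 1).descFactorial (n - 1 - i) * cyclesAtLeastCount m i := by
  classical
  let x₀ : Fin n := ⟨0, hn⟩
  have hperiod (π : Perm (Fin n)) : minimalPeriod π x₀ ≤ n :=
    (minimalPeriod_le_card).trans_eq (Fintype.card_fin n)
  have hfiber (i : ℕ) (hi : i ∈ Finset.range (n + 1 - m)) :
      ((Finset.univ.filter (CyclesAtLeast m)).filter
        fun π : Perm (Fin n) => n - minimalPeriod π x₀ = i).card =
        (n - 1).descFactorial (n - 1 - i) * cyclesAtLeastCount m i := by
    have hi := Finset.mem_range.1 hi
    have hiff (π : Perm (Fin n)) : CyclesAtLeast m π ∧ n - minimalPeriod π x₀ = i ↔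
        minimalPeriod π x₀ = n - 1 - i + 1 ∧ CyclesAtLeast m π := by
      have := hperiod π
      constructor
      · rintro ⟨hπ, hdiff⟩
        have := hπ x₀
        exact ⟨by omega, hπ⟩
      · rintro ⟨hp, hπ⟩
        exact ⟨hπ, by omega⟩
    rw [Finset.filter_filter, ← Fintype.card_subtype, ← Nat.card_eq_fintype_card,
      Nat.card_congr (Equiv.subtypeEquivRight hiff),
      natCard_minimalPeriod_eq_cyclesAtLeast x₀ (show m ≤ n - 1 - i + 1 by omega),
      Nat.card_eq_fintype_card, Fintype.card_fin, show n - (n - 1 - i + 1) = i by omega]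
  -- sort by the number of points outside the cycle through `x₀`
  rw [cyclesAtLeastCount, Nat.card_eq_fintype_card, Fintype.card_subtype,
    Finset.card_eq_sum_card_fiberwise (f := fun π : Perm (Fin n) => n - minimalPeriod π x₀)
      (t := Finset.range (n + 1 - m)) fun π hπ => ?_]
  · exact Finset.sum_congr rfl hfiber
  · have := (Finset.mem_filter.1 hπ).2 x₀
    have := hperiod π
    rw [Finset.mem_coe, Finset.mem_range]
    change n - minimalPeriod π x₀ < n + 1 - m
    omega

end Equiv.Perm

open Equiv.Perm Nat

def cyclesAtLeastProb (m n : ℕ) : ℝ :=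
  cyclesAtLeastCount m n / n !

theorem cyclesAtLeastProb_zero (m : ℕ) : cyclesAtLeastProb m 0 = 1 := by
  simp [cyclesAtLeastProb, cyclesAtLeastCount_zero]

theorem cyclesAtLeastProb_eq_sum {m n : ℕ} (hm : 1 ≤ m) (hn : 0 < n) :
    cyclesAtLeastProb m n = (∑ i ∈ Finset.range (n + 1 - m), cyclesAtLeastProb m i) / n := by
  have hterm (i : ℕ) (hi : i ∈ Finset.range (n + 1 - m)) :
      ((n - 1).descFactorial (n - 1 - i) * cyclesAtLeastCount m i : ℕ) / (n ! : ℝ) =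
        cyclesAtLeastProb m i / n := by
    have hfact : i ! * (n - 1).descFactorial (n - 1 - i) = (n - 1)! := by
      have := Nat.factorial_mul_descFactorial (n := n - 1) (k := n - 1 - i) (by omega)
      rwa [show n - 1 - (n - 1 - i) = i by have := Finset.mem_range.1 hi; omega] at this
    rw [cyclesAtLeastProb, ← Nat.mul_factorial_pred hn.ne', ← hfact]
    push_cast
    field_simp
  rw [cyclesAtLeastProb, cyclesAtLeastCount_eq_sum hm hn, Nat.cast_sum, Finset.sum_div,
    Finset.sum_div, Finset.sum_congr rfl hterm]

theorem sum_range_cyclesAtLeastProb {m N : ℕ} (hm : 1 ≤ m) (hN : 0 < N) :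
    ∑ i ∈ Finset.range N, cyclesAtLeastProb m i =
      1 + ∑ i ∈ Finset.Ico m N, cyclesAtLeastProb m i := by
  induction N, hN using Nat.le_induction with
  | base => simp [cyclesAtLeastProb_zero, Finset.Ico_eq_empty_of_le hm]
  | succ N hN ih =>
    rw [Finset.sum_range_succ, ih]
    rcases lt_or_ge N m with hNm | hmN
    · rw [cyclesAtLeastProb, cyclesAtLeastCount_eq_zero hN hNm, Finset.Ico_eq_empty_of_le hNm.le,
        Finset.Ico_eq_empty_of_le hNm]
      simp
    · rw [Finset.sum_Ico_succ_top hmN, add_assoc]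

theorem cyclesAtLeastProb_bounds {m n : ℕ} (hm : 1 ≤ m) (hmn : m ≤ n) :
    1 / (2 * m : ℝ) ≤ cyclesAtLeastProb m n ∧ cyclesAtLeastProb m n ≤ 1 / m := by
  induction n using Nat.strong_induction_on with
  | _ n ih =>
    have hm₀ : (0 : ℝ) < m := by exact_mod_cast hm
    have hn₀ : (0 : ℝ) < n := by exact_mod_cast hm.trans hmn
    set T := ∑ i ∈ Finset.Ico m (n + 1 - m), cyclesAtLeastProb m i
    set c := n + 1 - m - m
    have hlower : (c : ℝ) ≤ 2 * m * T := by
      have := Finset.card_nsmul_le_sum (Finset.Ico m (n + 1 - m)) _ _ fun i hi =>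
        (ih i (by rw [Finset.mem_Ico] at hi; omega) (Finset.mem_Ico.1 hi).1).1
      rw [Nat.card_Ico, nsmul_eq_mul] at this
      rwa [mul_one_div, div_le_iff₀' (by positivity)] at this
    have hupper : m * T ≤ c := by
      have := Finset.sum_le_card_nsmul (Finset.Ico m (n + 1 - m)) _ _ fun i hi =>
        (ih i (by rw [Finset.mem_Ico] at hi; omega) (Finset.mem_Ico.1 hi).1).2
      rw [Nat.card_Ico, nsmul_eq_mul] at this
      rwa [mul_one_div, le_div_iff₀' hm₀] at this
    have hc₁ : (n : ℝ) ≤ 2 * m + c := by exact_mod_cast (by omega : n ≤ 2 * m + c)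
    have hc₂ : (m : ℝ) + c ≤ n := by exact_mod_cast (by omega : m + c ≤ n)
    rw [cyclesAtLeastProb_eq_sum hm (by omega), sum_range_cyclesAtLeastProb hm (by omega),
      div_le_div_iff₀ (by positivity) hn₀, div_le_div_iff₀ hn₀ hm₀]
    constructor <;> linarith

theorem no_short_cycle_prob (n m : ℕ) (h1 : 1 ≤ m) (h2 : m ≤ n) :
    (1 : ℝ) / (2 * m) ≤
        (Nat.card {π : Equiv.Perm (Fin n) // NoShortCycle m π} : ℝ) / (Nat.factorial n : ℝ) ∧
      (Nat.card {π : Equiv.Perm (Fin n) // NoShortCycle m π} : ℝ) / (Nat.factorial n : ℝ) ≤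
        (1 : ℝ) / m :=
  -- `NoShortCycle m` is `CyclesAtLeast m` on `Fin n`, so the ratio is `cyclesAtLeastProb m n`
  cyclesAtLeastProb_bounds h1 h2

end
end

section
/- For all positive integers ℓ' ≤ ℓ, one has (1/ℓ) · E|𝓛(X_ℓ)| ≤ (1/ℓ') · E|𝓛(X_{ℓ'})|. -/
open scoped BigOperators

noncomputable section

/-- The set `𝓛(c) = { m₁ + 2m₂ + ⋯ + k·m_k : 0 ≤ m_j ≤ c_j }`. -/
def Lset (k : ℕ) (c : Fin k → ℕ) : Finset ℕ :=
  (Finset.Icc 0 c).image fun m => ∑ j : Fin k, ((j : ℕ) + 1) * m j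

/-- Probability mass of a Poisson random variable with parameter `lam` at `n`. -/
def poissonPdf (lam : ℝ) (n : ℕ) : ℝ := Real.exp (-lam) * lam ^ n / (Nat.factorial n)

/-- Joint probability mass of the independent vector `X_k = (X_1,…,X_k)`,
`X_i ∼ Pois(1/i)`, at `c`. -/
def pmfVec (k : ℕ) (c : Fin k → ℕ) : ℝ := ∏ i : Fin k, poissonPdf (1 / ((i : ℕ) + 1)) (c i)

/-- `E|𝓛(X_k)|`. -/
def EL (k : ℕ) : ℝ := ∑' c : Fin k → ℕ, ((Lset k c).card : ℝ) * pmfVec k c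

namespace ELaux

lemma poissonPdf_nonneg {lam : ℝ} (h : 0 ≤ lam) (n : ℕ) : 0 ≤ poissonPdf lam n := by
  unfold poissonPdf
  positivity

lemma poissonPdf_eq (lam : ℝ) (n : ℕ) :
    poissonPdf lam n = Real.exp (-lam) * (lam ^ n / n.factorial) := by
  unfold poissonPdf; ring

lemma summable_poissonPdf (lam : ℝ) : Summable (poissonPdf lam) := by
  have : Summable (fun n : ℕ => Real.exp (-lam) * (lam ^ n / n.factorial)) :=
    (Real.summable_pow_div_factorial lam).mul_left _
  exact this.congr fun n => (poissonPdf_eq lam n).symm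

lemma tsum_poissonPdf (lam : ℝ) : ∑' n : ℕ, poissonPdf lam n = 1 := by
  have h1 : ∑' n : ℕ, lam ^ n / n.factorial = Real.exp lam := by
    rw [Real.exp_eq_exp_ℝ, NormedSpace.exp_eq_tsum_div]
  calc ∑' n : ℕ, poissonPdf lam n
      = ∑' n : ℕ, Real.exp (-lam) * (lam ^ n / n.factorial) := by
        simp only [poissonPdf_eq]
    _ = Real.exp (-lam) * ∑' n : ℕ, lam ^ n / n.factorial := tsum_mul_left
    _ = 1 := by rw [h1, Real.exp_neg, inv_mul_cancel₀ (Real.exp_ne_zero lam)]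

lemma shift_eq (lam : ℝ) (m : ℕ) :
    ((m + 1 : ℕ) : ℝ) * poissonPdf lam (m + 1) = lam * poissonPdf lam m := by
  unfold poissonPdf
  rw [Nat.factorial_succ, pow_succ]
  push_cast
  have h : ((m.factorial : ℝ)) ≠ 0 := Nat.cast_ne_zero.mpr m.factorial_ne_zero
  field_simp

lemma summable_mul_self (lam : ℝ) : Summable (fun m : ℕ => (m : ℝ) * poissonPdf lam m) := by
  apply (summable_nat_add_iff 1).mp
  have : Summable (fun m : ℕ => lam * poissonPdf lam m) := (summable_poissonPdf lam).mul_left _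
  apply this.congr
  intro m
  exact (shift_eq lam m).symm

lemma tsum_mul_self (lam : ℝ) : ∑' m : ℕ, (m : ℝ) * poissonPdf lam m = lam := by
  rw [Summable.tsum_eq_zero_add (summable_mul_self lam)]
  simp only [Nat.cast_zero, zero_mul, zero_add]
  rw [tsum_congr (shift_eq lam), tsum_mul_left, tsum_poissonPdf, mul_one]

def G (lam : ℝ) (m : ℕ) : ℝ := ((m : ℝ) + 1) * poissonPdf lam m

lemma summable_G (lam : ℝ) : Summable (G lam) := by
  have := (summable_mul_self lam).add (summable_poissonPdf lam)
  apply this.congr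
  intro m
  unfold G
  ring

lemma tsum_G (lam : ℝ) : ∑' m : ℕ, G lam m = 1 + lam := by
  have h : ∀ m : ℕ, G lam m = (m : ℝ) * poissonPdf lam m + poissonPdf lam m := by
    intro m; unfold G; ring
  rw [tsum_congr h, Summable.tsum_add (summable_mul_self lam) (summable_poissonPdf lam),
    tsum_mul_self, tsum_poissonPdf]
  ring

lemma G_nonneg {lam : ℝ} (h : 0 ≤ lam) (m : ℕ) : 0 ≤ G lam m :=
  mul_nonneg (by positivity) (poissonPdf_nonneg h m)

lemma pmfVec_nonneg (k : ℕ) (c : Fin k → ℕ) : 0 ≤ pmfVec k c := by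
  apply Finset.prod_nonneg
  intro i _
  exact poissonPdf_nonneg (by positivity) _

/-- The summand. -/
def F (k : ℕ) (c : Fin k → ℕ) : ℝ := ((Lset k c).card : ℝ) * pmfVec k c

lemma F_nonneg (k : ℕ) (c : Fin k → ℕ) : 0 ≤ F k c :=
  mul_nonneg (by positivity) (pmfVec_nonneg k c)

lemma pmfVec_succ (k : ℕ) (c : Fin (k + 1) → ℕ) :
    pmfVec (k + 1) c
      = poissonPdf (1 / ((k : ℝ) + 1)) (c (Fin.last k)) * pmfVec k (Fin.init c) := by
  unfold pmfVec
  rw [Fin.prod_univ_castSucc, mul_comm]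
  simp [Fin.init, Fin.coe_castSucc, Fin.val_last]

lemma card_Lset_succ_le (k : ℕ) (c : Fin (k + 1) → ℕ) :
    (Lset (k + 1) c).card ≤ (c (Fin.last k) + 1) * (Lset k (Fin.init c)).card := by
  have hsub : Lset (k + 1) c ⊆
      (Finset.range (c (Fin.last k) + 1)).biUnion
        (fun j => (Lset k (Fin.init c)).image (fun x => x + (k + 1) * j)) := by
    intro x hx
    simp only [Lset, Finset.mem_image, Finset.mem_Icc] at hx
    obtain ⟨m, ⟨-, hmc⟩, rfl⟩ := hx
    rw [Finset.mem_biUnion]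
    refine ⟨m (Fin.last k), ?_, ?_⟩
    · rw [Finset.mem_range]
      exact Nat.lt_succ_of_le (hmc (Fin.last k))
    · rw [Finset.mem_image]
      refine ⟨∑ j : Fin k, ((j : ℕ) + 1) * (Fin.init m) j, ?_, ?_⟩
      · simp only [Lset, Finset.mem_image]
        refine ⟨Fin.init m, ?_, rfl⟩
        rw [Finset.mem_Icc]
        exact ⟨fun i => Nat.zero_le _, fun i => hmc (Fin.castSucc i)⟩
      · rw [Fin.sum_univ_castSucc]
        simp [Fin.init, Fin.val_last]
  calc (Lset (k + 1) c).card
      ≤ ((Finset.range (c (Fin.last k) + 1)).biUnion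
          (fun j => (Lset k (Fin.init c)).image (fun x => x + (k + 1) * j))).card :=
        Finset.card_le_card hsub
    _ ≤ ∑ j ∈ Finset.range (c (Fin.last k) + 1),
          ((Lset k (Fin.init c)).image (fun x => x + (k + 1) * j)).card :=
        Finset.card_biUnion_le
    _ ≤ ∑ _j ∈ Finset.range (c (Fin.last k) + 1), (Lset k (Fin.init c)).card :=
        Finset.sum_le_sum fun j _ => Finset.card_image_le
    _ = (c (Fin.last k) + 1) * (Lset k (Fin.init c)).card := by
        rw [Finset.sum_const, Finset.card_range, smul_eq_mul]

lemma lam_nonneg (k : ℕ) : (0 : ℝ) ≤ 1 / ((k : ℝ) + 1) := by positivity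

lemma F_succ_le (k : ℕ) (t : Fin k → ℕ) (m : ℕ) :
    F (k + 1) (Fin.snoc t m) ≤ G (1 / ((k : ℝ) + 1)) m * F k t := by
  have h1 : Fin.init (Fin.snoc t m : Fin (k + 1) → ℕ) = t := by simp
  have h2 : (Fin.snoc t m : Fin (k + 1) → ℕ) (Fin.last k) = m := by simp
  unfold F G
  rw [pmfVec_succ, h1, h2]
  have hcard : ((Lset (k + 1) (Fin.snoc t m)).card : ℝ)
      ≤ ((m : ℝ) + 1) * (Lset k t).card := by
    have := card_Lset_succ_le k (Fin.snoc t m)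
    rw [h1, h2] at this
    calc ((Lset (k + 1) (Fin.snoc t m)).card : ℝ)
        ≤ (((m + 1) * (Lset k t).card : ℕ) : ℝ) := Nat.cast_le.mpr this
      _ = ((m : ℝ) + 1) * (Lset k t).card := by push_cast; ring
  have hpdf : 0 ≤ poissonPdf (1 / ((k : ℝ) + 1)) m := poissonPdf_nonneg (lam_nonneg k) m
  have hpmf : 0 ≤ pmfVec k t := pmfVec_nonneg k t
  calc ((Lset (k + 1) (Fin.snoc t m)).card : ℝ)
        * (poissonPdf (1 / ((k : ℝ) + 1)) m * pmfVec k t)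
      ≤ (((m : ℝ) + 1) * (Lset k t).card)
        * (poissonPdf (1 / ((k : ℝ) + 1)) m * pmfVec k t) := by
        apply mul_le_mul_of_nonneg_right hcard (by positivity)
    _ = ((m : ℝ) + 1) * poissonPdf (1 / ((k : ℝ) + 1)) m
        * (((Lset k t).card : ℝ) * pmfVec k t) := by ring

/-- The equivalence splitting the last coordinate. -/
def e (k : ℕ) : ℕ × (Fin k → ℕ) ≃ (Fin (k + 1) → ℕ) := Fin.snocEquiv (fun _ => ℕ)

lemma e_apply (k : ℕ) (p : ℕ × (Fin k → ℕ)) : e k p = Fin.snoc p.2 p.1 := rfl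

lemma summable_GF (k : ℕ) (hF : Summable (F k)) :
    Summable (fun p : ℕ × (Fin k → ℕ) => G (1 / ((k : ℝ) + 1)) p.1 * F k p.2) := by
  apply summable_mul_of_summable_norm (f := G (1 / ((k : ℝ) + 1))) (g := F k)
  · apply Summable.congr (summable_G (1 / ((k : ℝ) + 1)))
    intro m
    rw [Real.norm_of_nonneg (G_nonneg (lam_nonneg k) m)]
  · apply Summable.congr hF
    intro c
    rw [Real.norm_of_nonneg (F_nonneg k c)]

lemma summable_F : ∀ k, Summable (F k) := by
  intro k
  induction k with
  | zero => exact Summable.of_finite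
  | succ k ih =>
    rw [← Equiv.summable_iff (e k)]
    apply Summable.of_nonneg_of_le (fun p => F_nonneg _ _)
      (fun p => ?_) (summable_GF k ih)
    rw [e_apply]
    exact F_succ_le k p.2 p.1

lemma EL_eq (k : ℕ) : EL k = ∑' c : Fin k → ℕ, F k c := rfl

lemma EL_nonneg (k : ℕ) : 0 ≤ EL k :=
  tsum_nonneg (fun c => F_nonneg k c)

lemma EL_succ_le (k : ℕ) : EL (k + 1) ≤ (1 + 1 / ((k : ℝ) + 1)) * EL k := by
  have h1 : EL (k + 1) = ∑' p : ℕ × (Fin k → ℕ), F (k + 1) (e k p) :=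
    ((e k).tsum_eq (F (k + 1))).symm
  have h2 : ∑' p : ℕ × (Fin k → ℕ), F (k + 1) (e k p)
      ≤ ∑' p : ℕ × (Fin k → ℕ), G (1 / ((k : ℝ) + 1)) p.1 * F k p.2 := by
    apply Summable.tsum_le_tsum _ ((Equiv.summable_iff (e k)).mpr (summable_F (k + 1)))
      (summable_GF k (summable_F k))
    intro p
    exact F_succ_le k p.2 p.1
  have h3 : ∑' p : ℕ × (Fin k → ℕ), G (1 / ((k : ℝ) + 1)) p.1 * F k p.2
      = (∑' m : ℕ, G (1 / ((k : ℝ) + 1)) m) * ∑' c : Fin k → ℕ, F k c := by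
    rw [tsum_mul_tsum_of_summable_norm]
    · apply Summable.congr (summable_G (1 / ((k : ℝ) + 1)))
      intro m
      rw [Real.norm_of_nonneg (G_nonneg (lam_nonneg k) m)]
    · apply Summable.congr (summable_F k)
      intro c
      rw [Real.norm_of_nonneg (F_nonneg k c)]
  rw [h1]
  calc ∑' p : ℕ × (Fin k → ℕ), F (k + 1) (e k p)
      ≤ ∑' p : ℕ × (Fin k → ℕ), G (1 / ((k : ℝ) + 1)) p.1 * F k p.2 := h2
    _ = (1 + 1 / ((k : ℝ) + 1)) * EL k := by rw [h3, tsum_G, EL_eq]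

lemma step (k : ℕ) (hk : 1 ≤ k) :
    (1 / ((k : ℝ) + 1)) * EL (k + 1) ≤ (1 / (k : ℝ)) * EL k := by
  have hk' : (1 : ℝ) ≤ (k : ℝ) := by exact_mod_cast hk
  have hkpos : (0 : ℝ) < (k : ℝ) := lt_of_lt_of_le one_pos hk'
  have hk1 : (0 : ℝ) < (k : ℝ) + 1 := by positivity
  have h := EL_succ_le k
  have hEL : 0 ≤ EL k := EL_nonneg k
  have hEL1 : 0 ≤ EL (k + 1) := EL_nonneg (k + 1)
  have h' : ((k : ℝ) + 1) * EL (k + 1) ≤ ((k : ℝ) + 2) * EL k := by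
    calc ((k : ℝ) + 1) * EL (k + 1)
        ≤ ((k : ℝ) + 1) * ((1 + 1 / ((k : ℝ) + 1)) * EL k) :=
          mul_le_mul_of_nonneg_left h hk1.le
      _ = ((k : ℝ) + 2) * EL k := by
          rw [← mul_assoc, mul_add, mul_one, mul_one_div, div_self hk1.ne']
          ring
  rw [div_mul_eq_mul_div, div_mul_eq_mul_div, one_mul, one_mul,
    div_le_div_iff₀ hk1 hkpos]
  nlinarith [mul_le_mul_of_nonneg_left h' hkpos.le]

end ELaux

theorem EL_div_monotone (l' l : ℕ) (h1 : 1 ≤ l') (h : l' ≤ l) :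
    (1 / (l : ℝ)) * EL l ≤ (1 / (l' : ℝ)) * EL l' := by
  induction l, h using Nat.le_induction with
  | base => exact le_rfl
  | succ n hn ih =>
    have hn1 : 1 ≤ n := le_trans h1 hn
    have := ELaux.step n hn1
    calc (1 / ((n + 1 : ℕ) : ℝ)) * EL (n + 1)
        ≤ (1 / (n : ℝ)) * EL n := by push_cast; exact this
      _ ≤ (1 / (l' : ℝ)) * EL l' := ih
end
end

section
/- Let k be a positive integer, let j_1,…,j_h ≤ k be distinct positive integers, and let a_1,…,a_h be positive integers. Then E[|𝓛(X_k)| · X_{j_1}^{a_1} ⋯ X_{j_h}^{a_h}] ≤ (C / (j_1 ⋯ j_h)) · E|𝓛(X_k)|, where C = ∏_{i=1}^h (B_{a_i} + B_{a_i + 1}) and B_m denotes the m-th moment E[Z^m] of a Poisson random variable Z with parameter 1 (the m-th Bell number). In particular, for h = 1 and a_1 = 1 one may take C = 3. -/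
/-!
Since `𝓛(c + c') ⊆ 𝓛(c) + 𝓛(c')`, splitting `c` into its coordinates `j₁, …, j_h` and the rest
gives `|𝓛(c)| ≤ ∏ᵢ (c_{jᵢ} + 1) · |𝓛(c')|`, where `c'` is `c` with those coordinates set to zero.
As `c'` does not see the coordinates `jᵢ`, independence factors the expectation into
`∏ᵢ E[(X_{jᵢ} + 1) X_{jᵢ}^{aᵢ}]` times `E|𝓛(X')| ≤ E|𝓛(X_k)|`. For `X ∼ Pois(λ)` the identity
`E[X^(m+1)] = λ E[(X+1)^m]` shows inductively that the moments increase with `λ`, hence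
`E[X^m] ≤ λ B_m` for `m ≥ 1` and `λ ≤ 1`; with `λ = 1/jᵢ` this is the factor
`(B_{aᵢ} + B_{aᵢ+1}) / jᵢ`.

All sums are taken in `ℝ≥0∞`, where no summability is needed; they are brought back to `ℝ` using
`E|𝓛(X_k)| ≤ ∏ᵢ E[Xᵢ + 1] < ∞`.
-/

open scoped BigOperators

noncomputable section

/-- The `m`-th moment `E[Z^m]` of a Poisson random variable `Z` with parameter 1,
i.e. the `m`-th Bell number. -/
def bellMoment (m : ℕ) : ℝ := ∑' n : ℕ, (n : ℝ) ^ m * poissonPdf 1 n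

open Finset
open scoped ENNReal Pointwise

section Lset

variable {k : ℕ}

lemma Lset_mono {c c' : Fin k → ℕ} (h : c ≤ c') : Lset k c ⊆ Lset k c' :=
  image_subset_image (Icc_subset_Icc le_rfl h)

lemma card_Lset_le_prod (c : Fin k → ℕ) : #(Lset k c) ≤ ∏ x, (c x + 1) := by
  refine card_image_le.trans_eq ?_
  simp [Pi.card_Icc]

lemma Lset_add_subset (c c' : Fin k → ℕ) : Lset k (c + c') ⊆ Lset k c + Lset k c' := by
  intro n hn
  obtain ⟨m, hm, rfl⟩ := mem_image.mp hn
  have hm' := (mem_Icc.mp hm).2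
  -- split `m ≤ c + c'` as `(m ⊓ c) + (m - m ⊓ c)` with the summands below `c` and `c'`
  refine mem_add.mpr ⟨_, mem_image_of_mem _ (mem_Icc.mpr ⟨zero_le, inf_le_right (a := m)⟩),
    _, mem_image_of_mem _ (mem_Icc.mpr ⟨zero_le (a := m - m ⊓ c), fun x => ?_⟩), ?_⟩
  · have := hm' x
    simp only [Pi.sub_apply, Pi.inf_apply, Pi.add_apply] at this ⊢
    omega
  · rw [← sum_add_distrib]
    refine sum_congr rfl fun x _ => ?_
    rw [← mul_add]
    simp only [Pi.sub_apply, Pi.inf_apply]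
    congr 1
    omega

lemma card_Lset_le_mul (S : Finset (Fin k)) (c : Fin k → ℕ) :
    #(Lset k c) ≤ (∏ x ∈ S, (c x + 1)) * #(Lset k (S.piecewise 0 c)) := by
  have hsplit : c = S.piecewise c 0 + S.piecewise 0 c := by
    ext x; by_cases hx : x ∈ S <;> simp [hx]
  calc #(Lset k c) ≤ #(Lset k (S.piecewise c 0)) * #(Lset k (S.piecewise 0 c)) := by
        conv_lhs => rw [hsplit]
        exact (card_le_card (Lset_add_subset _ _)).trans card_add_le
    _ ≤ (∏ x ∈ S, (c x + 1)) * #(Lset k (S.piecewise 0 c)) := by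
        gcongr
        refine (card_Lset_le_prod _).trans_eq ?_
        rw [← univ_inter S, ← prod_ite_mem univ S]
        refine prod_congr rfl fun x _ => ?_
        by_cases hx : x ∈ S <;> simp [hx]

lemma card_Lset_le_prod_comp_mul {h : ℕ} {j : Fin h → Fin k} (hj : Function.Injective j)
    (c : Fin k → ℕ) :
    #(Lset k c) ≤ (∏ i, (c (j i) + 1)) * #(Lset k ((univ.image j).piecewise 0 c)) := by
  simpa [prod_image fun i _ i' _ h => hj h] using card_Lset_le_mul (univ.image j) c

end Lset

section Fubini

variable {ι α : Type*}

lemma tsum_mul_funSplitAt [DecidableEq ι] (y : ι) (f : α → ℝ≥0∞)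
    (G : ({x // x ≠ y} → α) → ℝ≥0∞) :
    ∑' c : ι → α, f (c y) * G (fun x => c x.1) = (∑' a, f a) * ∑' v, G v := by
  rw [← (Equiv.funSplitAt y α).symm.tsum_eq, ENNReal.tsum_prod', ← ENNReal.tsum_mul_right]
  refine tsum_congr fun a => ?_
  rw [← ENNReal.tsum_mul_left]
  refine tsum_congr fun v => ?_
  congr 2
  · simp
  · ext x; simp [x.2]

variable [Fintype ι]

lemma tsum_pi_prod (g : ι → α → ℝ≥0∞) : ∑' c : ι → α, ∏ x, g x (c x) = ∏ x, ∑' a, g x a := by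
  classical
  induction h : Fintype.card ι using Nat.strong_induction_on generalizing ι with
  | _ n ih =>
    obtain hι | ⟨⟨y⟩⟩ := isEmpty_or_nonempty ι
    · simp
    have hcard : Fintype.card {x // x ≠ y} < n :=
      h ▸ Fintype.card_subtype_lt (p := (· ≠ y)) (x := y) (by simp)
    simp_rw [Fintype.prod_eq_mul_prod_subtype_ne _ y]
    rw [tsum_mul_funSplitAt y (g y) fun v => ∏ x : {x // x ≠ y}, g x (v x),
      ih _ hcard (fun x : {x // x ≠ y} => g x) rfl]

variable [DecidableEq ι] (p : ι → α → ℝ≥0∞)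

lemma tsum_mul_mul_prod_of_indep {y : ι} (hp : ∑' a, p y a = 1) (f : α → ℝ≥0∞)
    (K : (ι → α) → ℝ≥0∞) (hK : ∀ c c', (∀ x ≠ y, c x = c' x) → K c = K c') :
    ∑' c, f (c y) * K c * ∏ x, p x (c x) =
      (∑' a, f a * p y a) * ∑' c, K c * ∏ x, p x (c x) := by
  cases isEmpty_or_nonempty α with
  | inl hα =>
    have : IsEmpty (ι → α) := ⟨fun c => hα.false (c y)⟩
    simp
  | inr hα =>
    let K' : ({x // x ≠ y} → α) → ℝ≥0∞ := fun v =>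
      K ((Equiv.funSplitAt y α).symm (Classical.arbitrary α, v)) * ∏ x : {x // x ≠ y}, p x (v x)
    have hfactor (F : α → ℝ≥0∞) (c : ι → α) :
        F (c y) * K c * ∏ x, p x (c x) = F (c y) * p y (c y) * K' (fun x => c x.1) := by
      rw [hK c ((Equiv.funSplitAt y α).symm (Classical.arbitrary α, fun x => c x.1))
        (fun x hx => by simp [hx]), Fintype.prod_eq_mul_prod_subtype_ne _ y]
      ring
    have hK' : ∑' c, K c * ∏ x, p x (c x) = ∑' v, K' v := by
      calc ∑' c, K c * ∏ x, p x (c x) = ∑' c, p y (c y) * K' (fun x => c x.1) :=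
            tsum_congr fun c => by simpa using hfactor (fun _ => 1) c
        _ = ∑' v, K' v := by rw [tsum_mul_funSplitAt, hp, one_mul]
    simp_rw [hfactor f, hK']
    exact tsum_mul_funSplitAt y (fun a => f a * p y a) K'

lemma tsum_prod_mul_mul_prod_of_indep {κ : Type*} {j : κ → ι} (hj : Function.Injective j)
    (hp : ∀ i, ∑' a, p (j i) a = 1) (g : κ → α → ℝ≥0∞) (s : Finset κ) (K : (ι → α) → ℝ≥0∞)
    (hK : ∀ c c', (∀ x, (∀ i ∈ s, j i ≠ x) → c x = c' x) → K c = K c') :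
    ∑' c, (∏ i ∈ s, g i (c (j i))) * K c * ∏ x, p x (c x) =
      (∏ i ∈ s, ∑' a, g i a * p (j i) a) * ∑' c, K c * ∏ x, p x (c x) := by
  classical
  induction s using Finset.induction_on generalizing K with
  | empty => simp
  | insert i₀ s hi₀ ih =>
    have hindep : ∀ c c' : ι → α, (∀ x ≠ j i₀, c x = c' x) →
        (∏ i ∈ s, g i (c (j i))) * K c = (∏ i ∈ s, g i (c' (j i))) * K c' := by
      intro c c' h
      congr 1
      · exact prod_congr rfl fun i hi => by
          rw [h (j i) (hj.ne (ne_of_mem_of_not_mem hi hi₀))]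
      · exact hK c c' fun x hx => h x (hx i₀ (mem_insert_self i₀ s)).symm
    calc ∑' c, (∏ i ∈ insert i₀ s, g i (c (j i))) * K c * ∏ x, p x (c x)
        = ∑' c, g i₀ (c (j i₀)) * ((∏ i ∈ s, g i (c (j i))) * K c) * ∏ x, p x (c x) := by
          simp_rw [prod_insert hi₀, mul_assoc]
      _ = (∑' a, g i₀ a * p (j i₀) a) *
            ∑' c, (∏ i ∈ s, g i (c (j i))) * K c * ∏ x, p x (c x) :=
          tsum_mul_mul_prod_of_indep p (hp i₀) _ _ hindep
      _ = _ := by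
          rw [ih K fun c c' h => hK c c' fun x hx => h x fun i hi => hx i (mem_insert_of_mem hi),
            prod_insert hi₀, mul_assoc]

end Fubini

section Poisson

def poissonWeight (lam : ℝ) (n : ℕ) : ℝ≥0∞ := ENNReal.ofReal (poissonPdf lam n)

def poissonMoment (lam : ℝ) (m : ℕ) : ℝ≥0∞ := ∑' n : ℕ, (n : ℝ≥0∞) ^ m * poissonWeight lam n

variable {lam : ℝ}

lemma tsum_poissonWeight (hl : 0 ≤ lam) : ∑' n, poissonWeight lam n = 1 := by
  have h : HasSum (poissonPdf lam) 1 := ProbabilityTheory.hasSum_one_poissonMeasure ⟨lam, hl⟩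
  unfold poissonWeight
  rw [← ENNReal.ofReal_tsum_of_nonneg (fun n => by unfold poissonPdf; positivity) h.summable,
    h.tsum_eq, ENNReal.ofReal_one]

lemma succ_mul_poissonPdf_succ (lam : ℝ) (n : ℕ) :
    (n + 1) * poissonPdf lam (n + 1) = lam * poissonPdf lam n := by
  unfold poissonPdf
  rw [Nat.factorial_succ]
  push_cast
  field_simp
  ring

lemma poissonMoment_zero (hl : 0 ≤ lam) : poissonMoment lam 0 = 1 := by
  simp [poissonMoment, tsum_poissonWeight hl]

/-- `E[X^(m+1)] = λ E[(X+1)^m]` for `X ∼ Pois(λ)`, expanded binomially. -/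
lemma poissonMoment_succ (hl : 0 ≤ lam) (m : ℕ) :
    poissonMoment lam (m + 1) =
      ENNReal.ofReal lam * ∑ i ∈ range (m + 1), (m.choose i : ℝ≥0∞) * poissonMoment lam i := by
  have hshift (n : ℕ) : ((n + 1 : ℕ) : ℝ≥0∞) * poissonWeight lam (n + 1) =
      ENNReal.ofReal lam * poissonWeight lam n := by
    rw [poissonWeight, poissonWeight, ← ENNReal.ofReal_mul hl, ← succ_mul_poissonPdf_succ,
      ENNReal.ofReal_mul (by positivity)]
    norm_cast
  rw [poissonMoment, tsum_eq_zero_add' ENNReal.summable]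
  simp_rw [poissonMoment, ← ENNReal.tsum_mul_left]
  rw [← Summable.tsum_finsetSum fun _ _ => ENNReal.summable, ← ENNReal.tsum_mul_left]
  rw [Nat.cast_zero, zero_pow m.succ_ne_zero, zero_mul, zero_add]
  refine tsum_congr fun n => ?_
  rw [pow_succ, mul_assoc, hshift, mul_left_comm]
  congr 1
  rw [Nat.cast_add_one, add_pow, sum_mul]
  exact sum_congr rfl fun i _ => by ring

lemma poissonMoment_ne_top (hl : 0 ≤ lam) (m : ℕ) : poissonMoment lam m ≠ ⊤ := by
  induction m using Nat.strong_induction_on with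
  | _ m ih =>
    rcases m with _ | m
    · simp [poissonMoment_zero hl]
    rw [poissonMoment_succ hl]
    exact ENNReal.mul_ne_top ENNReal.ofReal_ne_top <| ENNReal.sum_ne_top.mpr fun i hi =>
      ENNReal.mul_ne_top (ENNReal.natCast_ne_top _) (ih i (mem_range.mp hi))

lemma poissonMoment_mono {mu : ℝ} (hl : 0 ≤ lam) (hle : lam ≤ mu) (m : ℕ) :
    poissonMoment lam m ≤ poissonMoment mu m := by
  induction m using Nat.strong_induction_on with
  | _ m ih =>
    rcases m with _ | m
    · rw [poissonMoment_zero hl, poissonMoment_zero (hl.trans hle)]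
    rw [poissonMoment_succ hl, poissonMoment_succ (hl.trans hle)]
    gcongr with i hi
    exact ih i (mem_range.mp hi)

lemma poissonMoment_succ_le (hl : 0 ≤ lam) (hl1 : lam ≤ 1) (m : ℕ) :
    poissonMoment lam (m + 1) ≤ ENNReal.ofReal lam * poissonMoment 1 (m + 1) := by
  rw [poissonMoment_succ hl, poissonMoment_succ zero_le_one, ENNReal.ofReal_one, one_mul]
  gcongr
  exact poissonMoment_mono hl hl1 _

lemma bellMoment_eq_toReal (m : ℕ) : bellMoment m = (poissonMoment 1 m).toReal := by
  rw [poissonMoment, ENNReal.tsum_toReal_eq fun n => by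
    simp [poissonWeight, ENNReal.mul_ne_top]]
  refine tsum_congr fun n => ?_
  rw [ENNReal.toReal_mul, poissonWeight, ENNReal.toReal_ofReal (by unfold poissonPdf; positivity)]
  simp

lemma poissonMoment_one_one : poissonMoment 1 1 = 1 := by
  simp [poissonMoment_succ, poissonMoment_zero]

lemma bellMoment_one : bellMoment 1 = 1 := by
  simp [bellMoment_eq_toReal, poissonMoment_one_one]

lemma bellMoment_two : bellMoment 2 = 2 := by
  rw [bellMoment_eq_toReal, poissonMoment_succ zero_le_one, sum_range_succ, sum_range_one,
    poissonMoment_zero zero_le_one, poissonMoment_one_one]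
  norm_num

lemma tsum_succ_mul_pow_mul_poissonWeight_le (hl : 0 ≤ lam) (hl1 : lam ≤ 1) {a : ℕ}
    (ha : 1 ≤ a) :
    ∑' n : ℕ, ((n : ℝ≥0∞) + 1) * (n : ℝ≥0∞) ^ a * poissonWeight lam n ≤
      ENNReal.ofReal lam * (poissonMoment 1 a + poissonMoment 1 (a + 1)) := by
  obtain ⟨b, rfl⟩ := Nat.exists_eq_add_of_le' ha
  have hsplit (n : ℕ) : ((n : ℝ≥0∞) + 1) * (n : ℝ≥0∞) ^ (b + 1) * poissonWeight lam n =
      (n : ℝ≥0∞) ^ (b + 1) * poissonWeight lam n +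
        (n : ℝ≥0∞) ^ (b + 1 + 1) * poissonWeight lam n := by
    ring
  simp_rw [hsplit]
  rw [ENNReal.tsum_add, mul_add]
  exact add_le_add (poissonMoment_succ_le hl hl1 b) (poissonMoment_succ_le hl hl1 (b + 1))

end Poisson

section MixedMoment

variable {k : ℕ}

def poissonRate (x : Fin k) : ℝ := 1 / ((x : ℕ) + 1)

lemma poissonRate_nonneg (x : Fin k) : 0 ≤ poissonRate x := by
  unfold poissonRate; positivity

lemma poissonRate_le_one (x : Fin k) : poissonRate x ≤ 1 := by
  rw [poissonRate, div_le_one (by positivity)]; simp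

lemma tsum_eq_toReal_tsum_ofReal {β : Type*} {f : β → ℝ} (hf : ∀ b, 0 ≤ f b) :
    ∑' b, f b = (∑' b, ENNReal.ofReal (f b)).toReal := by
  rw [ENNReal.tsum_toReal_eq fun _ => ENNReal.ofReal_ne_top]
  exact tsum_congr fun b => (ENNReal.toReal_ofReal (hf b)).symm

lemma pmfVec_nonneg (c : Fin k → ℕ) : 0 ≤ pmfVec k c :=
  prod_nonneg fun x _ => by unfold poissonPdf; positivity

lemma ofReal_pmfVec (c : Fin k → ℕ) :
    ENNReal.ofReal (pmfVec k c) = ∏ x : Fin k, poissonWeight (poissonRate x) (c x) :=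
  ENNReal.ofReal_prod_of_nonneg fun x _ => by unfold poissonPdf; positivity

lemma EL_eq_toReal : EL k =
    (∑' c, (#(Lset k c) : ℝ≥0∞) * ∏ x : Fin k, poissonWeight (poissonRate x) (c x)).toReal := by
  rw [EL, tsum_eq_toReal_tsum_ofReal fun c => mul_nonneg (Nat.cast_nonneg _) (pmfVec_nonneg c)]
  simp_rw [ENNReal.ofReal_mul (Nat.cast_nonneg _), ENNReal.ofReal_natCast, ofReal_pmfVec]

lemma tsum_card_Lset_mul_ne_top :
    ∑' c, (#(Lset k c) : ℝ≥0∞) * ∏ x : Fin k, poissonWeight (poissonRate x) (c x) ≠ ⊤ := by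
  have hbound : ∑' c, (#(Lset k c) : ℝ≥0∞) * ∏ x : Fin k, poissonWeight (poissonRate x) (c x)
      ≤ ∏ x : Fin k, ∑' n : ℕ, ((n : ℝ≥0∞) + 1) * poissonWeight (poissonRate x) n := by
    rw [← tsum_pi_prod]
    refine ENNReal.tsum_le_tsum fun c => ?_
    rw [prod_mul_distrib]
    gcongr
    exact_mod_cast card_Lset_le_prod c
  refine ne_top_of_le_ne_top (ENNReal.prod_ne_top fun x _ => ?_) hbound
  simp_rw [add_mul, one_mul, ENNReal.tsum_add]
  refine ENNReal.add_ne_top.mpr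
    ⟨?_, (tsum_poissonWeight (poissonRate_nonneg x)).trans_ne ENNReal.one_ne_top⟩
  simpa [poissonMoment] using poissonMoment_ne_top (poissonRate_nonneg x) 1

lemma tsum_card_Lset_mul_prod_pow_le {h : ℕ} {j : Fin h → Fin k} (hj : Function.Injective j)
    (a : Fin h → ℕ) (ha : ∀ i, 1 ≤ a i) :
    ∑' c, (#(Lset k c) : ℝ≥0∞) * (∏ i, (c (j i) : ℝ≥0∞) ^ a i) *
        ∏ x : Fin k, poissonWeight (poissonRate x) (c x) ≤
      (∏ i, ENNReal.ofReal (poissonRate (j i)) *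
          (poissonMoment 1 (a i) + poissonMoment 1 (a i + 1))) *
        ∑' c, (#(Lset k c) : ℝ≥0∞) * ∏ x : Fin k, poissonWeight (poissonRate x) (c x) := by
  set S := univ.image j
  calc _ ≤ ∑' c, (∏ i, ((c (j i) : ℝ≥0∞) + 1) * (c (j i) : ℝ≥0∞) ^ a i) *
          (#(Lset k (S.piecewise 0 c)) : ℝ≥0∞) *
          ∏ x : Fin k, poissonWeight (poissonRate x) (c x) := by
        refine ENNReal.tsum_le_tsum fun c => ?_
        gcongr ?_ * _
        calc (#(Lset k c) : ℝ≥0∞) * ∏ i, (c (j i) : ℝ≥0∞) ^ a i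
            ≤ (∏ i, ((c (j i) : ℝ≥0∞) + 1)) * #(Lset k (S.piecewise 0 c)) *
                ∏ i, (c (j i) : ℝ≥0∞) ^ a i := by
              gcongr
              exact_mod_cast card_Lset_le_prod_comp_mul hj c
          _ = _ := by rw [prod_mul_distrib]; ring
    _ = (∏ i, ∑' n : ℕ, ((n : ℝ≥0∞) + 1) * (n : ℝ≥0∞) ^ a i *
            poissonWeight (poissonRate (j i)) n) *
          ∑' c, (#(Lset k (S.piecewise 0 c)) : ℝ≥0∞) *
            ∏ x : Fin k, poissonWeight (poissonRate x) (c x) := by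
        refine tsum_prod_mul_mul_prod_of_indep (fun x : Fin k => poissonWeight (poissonRate x))
          hj (fun i => tsum_poissonWeight (poissonRate_nonneg _))
          (fun i n => ((n : ℝ≥0∞) + 1) * (n : ℝ≥0∞) ^ a i) univ
          (fun c => #(Lset k (S.piecewise 0 c))) fun c c' hcc' => ?_
        congr 3
        ext x
        by_cases hx : x ∈ S
        · simp [hx]
        · simp only [hx, not_false_eq_true, piecewise_eq_of_notMem]
          exact hcc' x fun i _ hi => hx (hi ▸ mem_image_of_mem j (mem_univ i))
    _ ≤ _ := by
        gcongr with i _ c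
        · exact tsum_succ_mul_pow_mul_poissonWeight_le (poissonRate_nonneg _)
            (poissonRate_le_one _) (ha i)
        · exact Lset_mono (S.piecewise_le_of_le_of_le (fun _ => zero_le) le_rfl)

lemma mixed_moment_le {h : ℕ} {j : Fin h → Fin k} (hj : Function.Injective j)
    (a : Fin h → ℕ) (ha : ∀ i, 1 ≤ a i) :
    ∑' c : Fin k → ℕ, (#(Lset k c) : ℝ) * (∏ i, (c (j i) : ℝ) ^ a i) * pmfVec k c ≤
      (∏ i, (bellMoment (a i) + bellMoment (a i + 1))) / (∏ i, ((j i : ℕ) + 1 : ℝ)) * EL k := by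
  have hM (m : ℕ) : poissonMoment 1 m ≠ ⊤ := poissonMoment_ne_top zero_le_one m
  have hLHS : ∑' c : Fin k → ℕ, (#(Lset k c) : ℝ) * (∏ i, (c (j i) : ℝ) ^ a i) * pmfVec k c =
      (∑' c, (#(Lset k c) : ℝ≥0∞) * (∏ i, (c (j i) : ℝ≥0∞) ^ a i) *
        ∏ x : Fin k, poissonWeight (poissonRate x) (c x)).toReal := by
    rw [tsum_eq_toReal_tsum_ofReal fun c => by have := pmfVec_nonneg c; positivity]
    refine congrArg _ (tsum_congr fun c => ?_)
    rw [ENNReal.ofReal_mul (by positivity), ENNReal.ofReal_mul (by positivity), ofReal_pmfVec,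
      ENNReal.ofReal_prod_of_nonneg fun i _ => by positivity]
    simp
  have hC : (∏ i, ENNReal.ofReal (poissonRate (j i)) *
      (poissonMoment 1 (a i) + poissonMoment 1 (a i + 1))).toReal =
      (∏ i, (bellMoment (a i) + bellMoment (a i + 1))) / (∏ i, ((j i : ℕ) + 1 : ℝ)) := by
    simp only [ENNReal.toReal_prod, ENNReal.toReal_mul, ENNReal.toReal_add (hM _) (hM _),
      ENNReal.toReal_ofReal (poissonRate_nonneg _), ← bellMoment_eq_toReal, prod_mul_distrib]
    simp only [poissonRate, one_div, prod_inv_distrib]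
    ring
  calc _ = _ := hLHS
    _ ≤ _ := ENNReal.toReal_mono (ENNReal.mul_ne_top (ENNReal.prod_ne_top fun i _ =>
          ENNReal.mul_ne_top ENNReal.ofReal_ne_top (ENNReal.add_ne_top.mpr ⟨hM _, hM _⟩))
          tsum_card_Lset_mul_ne_top) (tsum_card_Lset_mul_prod_pow_le hj a ha)
    _ = _ := by rw [ENNReal.toReal_mul, hC, ← EL_eq_toReal]

end MixedMoment

theorem mixed_moment_bound :
    (∀ (k h : ℕ), 0 < k → ∀ (j : Fin h → Fin k), Function.Injective j →
      ∀ (a : Fin h → ℕ), (∀ i, 1 ≤ a i) →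
        (∑' c : Fin k → ℕ,
            ((Lset k c).card : ℝ) * (∏ i : Fin h, (c (j i) : ℝ) ^ (a i)) * pmfVec k c) ≤
          (∏ i : Fin h, (bellMoment (a i) + bellMoment (a i + 1))) /
            (∏ i : Fin h, ((j i : ℕ) + 1 : ℝ)) * EL k) ∧
    (∀ (k : ℕ), 0 < k → ∀ j : Fin k,
        (∑' c : Fin k → ℕ, ((Lset k c).card : ℝ) * (c j : ℝ) * pmfVec k c) ≤
          3 / ((j : ℕ) + 1 : ℝ) * EL k) := by
  refine ⟨fun k h _ j hj a ha => mixed_moment_le hj a ha, fun k _ j => ?_⟩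
  have h1 := mixed_moment_le (j := fun _ : Fin 1 => j) (Function.injective_of_subsingleton _)
    (fun _ => 1) fun _ => le_rfl
  norm_num [bellMoment_one, bellMoment_two] at h1
  exact h1
end
end

section
/- The limit as n → ∞ of i(n,2), the proportion of permutations of {1,…,n} fixing some set of size 2, equals 1 - 2e^{-3/2}. -/
open scoped BigOperators

noncomputable section

/-- `π` has an invariant set of size `k`. -/
def hasInvariantSet (n k : ℕ) (π : Equiv.Perm (Fin n)) : Prop :=
  ∃ s : Finset (Fin n), s.card = k ∧ ∀ x ∈ s, π x ∈ s

/-- `i(n,k)`: the proportion of permutations of `{1,…,n}` having an invariant set of size `k`. -/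
def iProp (n k : ℕ) : ℝ :=
  (Nat.card {π : Equiv.Perm (Fin n) // hasInvariantSet n k π} : ℝ) /
    (Nat.card (Equiv.Perm (Fin n)) : ℝ)

/-!
A permutation has no invariant set of size `2` iff it has at most one fixed point and no
`2`-cycle. Let `c_{ij}(π)` count the ordered configurations of `i` fixed points and `j` oriented
`2`-cycles of `π`; if `π` has `F` fixed points and `T` two-cycles, `c_{ij}(π) = F^(i) T^(j) 2^j`
(falling factorials). By inclusion–exclusion the indicator of the event is `∑ a_i b_j c_{ij}(π)`
with `a_i = (-1)^i (1 - i) / i!` and `b_j = (-1/2)^j / j!`. A configuration on `i + 2j ≤ n`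
points extends to exactly `(n - i - 2j)!` permutations, so `c_{ij}` has mean `1` if `i + 2j ≤ n`
and `0` otherwise. Hence `1 - i(n,2)` is the partial sum of `∑ a_i b_j` over `i + 2j ≤ n`, which
tends to `(∑ a_i)(∑ b_j) = 2e^{-1} e^{-1/2}`.
-/

open Equiv Finset Function
open scoped Nat

section Semiconj

variable {D α : Type*}

theorem Nat.card_embedding [Finite D] [Finite α] :
    Nat.card (D ↪ α) = (Nat.card α).descFactorial (Nat.card D) := by
  have := Fintype.ofFinite D
  have := Fintype.ofFinite α
  simp only [Nat.card_eq_fintype_card, Fintype.card_embedding_eq]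

theorem card_perm_semiconj [Finite α] (u : D ↪ α) (σ : Perm D) :
    Nat.card {π : Perm α // Semiconj u σ π} = (Nat.card α - Nat.card D)! := by
  classical
  have := Fintype.ofFinite α
  have : Finite D := .of_injective u u.injective
  have := Fintype.ofFinite D
  -- The solutions are `ρ * τ` with `τ` fixing `range u` pointwise.
  let ρ : Perm α := Perm.ofSubtype ((ofInjective u u.injective).permCongr σ)
  have hρ (d : D) : ρ (u d) = u (σ d) := by
    simp [ρ, Perm.ofSubtype_apply_of_mem _ (Set.mem_range_self d), permCongr_apply,
      ofInjective_symm_apply]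
  have hiff (π : Perm α) : Semiconj u σ π ↔ ∀ a, ¬ a ∉ Set.range u → (ρ⁻¹ * π) a = a := by
    simp only [not_not, Set.forall_mem_range, Perm.mul_apply, Perm.inv_eq_iff_eq, hρ]
    exact ⟨fun h d => (h d).symm, fun h d => (h d).symm⟩
  rw [Nat.card_congr ((Equiv.subtypeEquiv (Equiv.mulLeft ρ⁻¹) hiff).trans
      (Perm.subtypeEquivSubtypePerm _).symm), Nat.card_perm, Nat.card_eq_fintype_card,
    Fintype.card_subtype_compl, Fintype.card_range, ← Nat.card_eq_fintype_card,
    ← Nat.card_eq_fintype_card]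

theorem sum_card_semiconj [Fintype D] [Fintype α] [DecidableEq α] (σ : Perm D) :
    ∑ π : Perm α, Nat.card {u : D ↪ α // Semiconj u σ π} =
      (Nat.card α).descFactorial (Nat.card D) * (Nat.card α - Nat.card D)! := by
  classical
  calc ∑ π : Perm α, Nat.card {u : D ↪ α // Semiconj u σ π}
      = ∑ π : Perm α, ∑ u : D ↪ α, if Semiconj u σ π then 1 else 0 := by
        simp only [Nat.card_eq_fintype_card, Fintype.card_subtype, Finset.card_filter]
    _ = ∑ u : D ↪ α, Nat.card {π : Perm α // Semiconj u σ π} := by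
        rw [Finset.sum_comm]
        simp only [Nat.card_eq_fintype_card, Fintype.card_subtype, Finset.card_filter]
    _ = _ := by
        simp only [card_perm_semiconj, Finset.sum_const, Finset.card_univ, smul_eq_mul,
          ← Nat.card_eq_fintype_card, Nat.card_embedding]

end Semiconj

section Involution

universe u

theorem Function.Involutive.exists_equiv_prod_bool {X : Type u} {f : X → X} (hf : Involutive f)
    (hfix : ∀ x, f x ≠ x) :
    ∃ (Q : Type u) (e : X ≃ Q × Bool), ∀ x, e (f x) = Prod.map id not (e x) := by
  classical
  -- Choosing an arbitrary linear order, each orbit `{x, f x}` is represented by its smaller point.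
  let : LinearOrder X := IsWellOrder.linearOrder WellOrderingRel
  have hlt (x : X) (h : ¬ x < f x) : f x < x := lt_of_le_of_ne (not_lt.1 h) (hfix x)
  let e : X ≃ {x // x < f x} × Bool :=
    { toFun x := if h : x < f x then (⟨x, h⟩, true) else (⟨f x, (hf x).symm ▸ hlt x h⟩, false)
      invFun q := if q.2 then q.1 else f q.1
      left_inv x := by by_cases h : x < f x <;> simp [h, hf x]
      right_inv := by
        rintro ⟨⟨x, hx⟩, _ | _⟩
        · simp [hf x, hx.not_gt]
        · simp [hx] }
  refine ⟨_, e, fun x => ?_⟩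
  by_cases h : x < f x
  · simp [e, h, h.not_gt, hf x]
  · simp [e, h, hlt x h, hf x]

def semiconjProdBoolEquiv (κ Q : Type*) :
    {w : κ × Bool ↪ Q × Bool // Semiconj w (Prod.map id not) (Prod.map id not)} ≃
      (κ ↪ Q) × (κ → Bool) where
  toFun w :=
    (⟨fun t => (w.1 (t, false)).1, fun t s h => by
        obtain ⟨w, hw⟩ := w
        have hflip : w (t, true) = Prod.map id not (w (t, false)) := hw (t, false)
        rcases Bool.eq_or_eq_not (w (t, false)).2 (w (s, false)).2 with h2 | h2
        · simpa using w.injective (Prod.ext h h2)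
        · simpa using w.injective (hflip.trans (Prod.ext h (by simp [h2])))⟩,
      fun t => (w.1 (t, false)).2)
  invFun vc :=
    ⟨⟨fun p => (vc.1 p.1, xor p.2 (vc.2 p.1)), by
        rintro ⟨t, b⟩ ⟨s, b'⟩ h
        obtain ⟨h1, h2⟩ := Prod.mk.inj h
        obtain rfl := vc.1.injective h1
        exact congrArg _ (Bool.xor_left_inj.mp h2)⟩,
      fun ⟨t, b⟩ => Prod.ext rfl (Bool.not_xor b (vc.2 t))⟩
  left_inv := by
    rintro ⟨w, hw⟩
    refine Subtype.ext (Embedding.ext ?_)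
    rintro ⟨t, _ | _⟩
    · change ((w (t, false)).1, xor false (w (t, false)).2) = w (t, false)
      simp
    · change ((w (t, false)).1, xor true (w (t, false)).2) = w (t, true)
      rw [Bool.true_xor]
      exact (hw (t, false)).symm
  right_inv vc := by
    ext t
    · rfl
    · exact Bool.false_xor _

theorem card_semiconj_prod_bool_of_involutive {κ X : Type*} [Finite κ] [Finite X] {f : X → X}
    (hf : Involutive f) (hfix : ∀ x, f x ≠ x) :
    Nat.card {w : κ × Bool ↪ X // Semiconj w (Prod.map id not) f} =
      (Nat.card X / 2).descFactorial (Nat.card κ) * 2 ^ Nat.card κ := by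
  obtain ⟨Q, e, he⟩ := hf.exists_equiv_prod_bool hfix
  have : Finite (Q × Bool) := .of_equiv X e
  have : Finite Q := .prod_left Bool
  have hX : Nat.card X / 2 = Nat.card Q := by
    rw [Nat.card_congr e, Nat.card_prod, Nat.card_eq_fintype_card (α := Bool), Fintype.card_bool]
    omega
  have hsemiconj (w : κ × Bool ↪ X) : Semiconj w (Prod.map id not) f ↔
      Semiconj (embeddingCongr (.refl _) e w) (Prod.map id not) (Prod.map id not) := by
    simp [Semiconj, ← he]
  rw [Nat.card_congr ((subtypeEquiv _ hsemiconj).trans (semiconjProdBoolEquiv κ Q)),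
    Nat.card_prod, Nat.card_embedding, Nat.card_fun, Nat.card_eq_fintype_card (α := Bool),
    Fintype.card_bool, hX]

end Involution

section ModelInvolution

variable {ι κ α : Type*}

def semiconjSumEquiv {g : κ → κ} {f : α → α} (hg : ∀ k, g k ≠ k) :
    {u : ι ⊕ κ ↪ α // Semiconj u (Sum.map id g) f} ≃
      {v : ι ↪ α // ∀ i, v i ∈ fixedPoints f} × {w : κ ↪ α // Semiconj w g f} where
  toFun u := (⟨Embedding.inl.trans u.1, fun i => (u.2 (.inl i)).symm⟩,
    ⟨Embedding.inr.trans u.1, fun k => u.2 (.inr k)⟩)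
  invFun vw :=
    ⟨sumEmbeddingEquivProdEmbeddingDisjoint.symm ⟨(vw.1.1, vw.2.1), by
      rw [Set.disjoint_left]
      rintro _ ⟨i, rfl⟩ ⟨k, hk⟩
      apply hg k (vw.2.1.injective _)
      rw [vw.2.2 k, hk, vw.1.2 i]⟩, by rintro (i | k); exacts [(vw.1.2 i).symm, vw.2.2 k]⟩
  left_inv u := by ext (i | k) <;> rfl
  right_inv vw := rfl

def semiconjCodRestrictEquiv {D : Type*} {g : D → D} {f : α → α} {S : Set α}
    (hS : Set.MapsTo f S S) (hmem : ∀ w : D ↪ α, Semiconj w g f → ∀ d, w d ∈ S) :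
    {w : D ↪ α // Semiconj w g f} ≃ {w : D ↪ S // Semiconj w g (hS.restrict f S S)} where
  toFun w := ⟨w.1.codRestrict S (hmem w.1 w.2), fun d => Subtype.ext (w.2 d)⟩
  invFun w := ⟨w.1.trans (Embedding.subtype _), fun d => congrArg Subtype.val (w.2 d)⟩

def twoCyclePts (π : Perm α) : Set α := {x | π x ≠ x ∧ π (π x) = x}

theorem mapsTo_twoCyclePts (π : Perm α) : Set.MapsTo π (twoCyclePts π) (twoCyclePts π) :=
  fun x hx => ⟨by rw [hx.2]; exact hx.1.symm, by rw [hx.2]⟩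

theorem mem_twoCyclePts_of_semiconj {π : Perm α} {w : κ × Bool ↪ α}
    (hw : Semiconj w (Prod.map id not) π) (p : κ × Bool) : w p ∈ twoCyclePts π := by
  refine ⟨fun h => ?_, ?_⟩
  · simpa using congrArg Prod.snd (w.injective ((hw p).trans h))
  · rw [← hw, ← hw, Prod.map_map, Bool.involutive_not.comp_self, Function.comp_id, Prod.map_id,
      id]

-- Configurations of fixed points and oriented `2`-cycles of `π` are the embeddings of
-- `ι ⊕ κ × Bool` that semiconjugate this model to `π`.
def modelInvolution (ι κ : Type*) : Perm (ι ⊕ κ × Bool) :=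
  sumCongr (.refl ι) (prodCongr (.refl κ) boolNot)

theorem coe_modelInvolution :
    ⇑(modelInvolution ι κ) = Sum.map id (Prod.map id not) := rfl

theorem card_semiconj_modelInvolution [Finite ι] [Finite κ] [Finite α] (π : Perm α) :
    Nat.card {u : ι ⊕ κ × Bool ↪ α // Semiconj u (modelInvolution ι κ) π} =
      (Nat.card (fixedPoints π)).descFactorial (Nat.card ι) *
        ((Nat.card (twoCyclePts π) / 2).descFactorial (Nat.card κ) * 2 ^ Nat.card κ) := by
  have hinv : Involutive ((mapsTo_twoCyclePts π).restrict π _ _) := fun x => Subtype.ext x.2.2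
  have hfix (x : twoCyclePts π) : (mapsTo_twoCyclePts π).restrict π _ _ x ≠ x :=
    fun h => x.2.1 (congrArg Subtype.val h)
  let e := (semiconjSumEquiv (ι := ι) (κ := κ × Bool) (f := π) (by simp)).trans
    (prodCongr (Equiv.codRestrict ι _)
      (semiconjCodRestrictEquiv (mapsTo_twoCyclePts π) fun _ => mem_twoCyclePts_of_semiconj))
  rw [coe_modelInvolution, Nat.card_congr e, Nat.card_prod, Nat.card_embedding,
    card_semiconj_prod_bool_of_involutive hinv hfix]

end ModelInvolution

theorem hasInvariantSet_two_iff {n : ℕ} (π : Perm (Fin n)) :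
    hasInvariantSet n 2 π ↔ 1 < Nat.card (fixedPoints π) ∨ 1 < Nat.card (twoCyclePts π) := by
  rw [Nat.card_coe_set_eq, Nat.card_coe_set_eq, Set.one_lt_ncard_iff, Set.one_lt_ncard_iff]
  constructor
  · rintro ⟨s, hs, hinv⟩
    obtain ⟨x, y, hxy, rfl⟩ := Finset.card_eq_two.1 hs
    have hx : π x = x ∨ π x = y := by simpa using hinv x (by simp)
    have hy : π y = x ∨ π y = y := by simpa using hinv y (by simp)
    rcases hx with hx | hx
    · have hy : π y = y := hy.resolve_left fun h => hxy.symm (π.injective (h.trans hx.symm))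
      exact .inl ⟨x, y, hx, hy, hxy⟩
    · have hy : π y = x := hy.resolve_right fun h => hxy (π.injective (hx.trans h.symm))
      refine .inr ⟨x, y, ⟨?_, ?_⟩, ⟨?_, ?_⟩, hxy⟩ <;> simp [hx, hy, hxy, hxy.symm]
  · rintro (⟨x, y, hx, hy, hxy⟩ | ⟨x, -, hx, -⟩)
    · refine ⟨{x, y}, Finset.card_pair hxy, fun z hz => ?_⟩
      rcases Finset.mem_insert.1 hz with rfl | hz
      · simp [show π z = z from hx]
      · simp [Finset.mem_singleton.1 hz, show π y = y from hy]
    · refine ⟨{x, π x}, Finset.card_pair (Ne.symm hx.1), fun z hz => ?_⟩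
      rcases Finset.mem_insert.1 hz with rfl | hz
      · simp
      · simp [Finset.mem_singleton.1 hz, hx.2]

theorem sum_range_neg_one_pow_mul_choose {N m : ℕ} (h : N < m) :
    ∑ j ∈ range m, (-1 : ℝ) ^ j * N.choose j = if N = 0 then 1 else 0 := by
  obtain ⟨k, rfl⟩ := Nat.exists_eq_add_of_le h
  rw [Finset.sum_range_add, Finset.sum_eq_zero (s := range k) fun i _ => by
      rw [Nat.choose_eq_zero_of_lt (by omega), Nat.cast_zero, mul_zero], add_zero]
  exact_mod_cast Int.alternating_sum_range_choose

theorem sum_range_neg_one_pow_mul_mul_choose {N m : ℕ} (h : N < m) :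
    ∑ i ∈ range m, (-1 : ℝ) ^ i * i * N.choose i = if N = 1 then -1 else 0 := by
  obtain ⟨m, rfl⟩ := Nat.exists_eq_succ_of_ne_zero (by omega : m ≠ 0)
  rw [Finset.sum_range_succ', Nat.cast_zero, mul_zero, zero_mul, add_zero]
  rcases N with _ | N
  · simp
  -- `(i + 1) * C(N + 1, i + 1) = (N + 1) * C(N, i)` reduces the sum to the unweighted one.
  have hshift (i : ℕ) : (-1 : ℝ) ^ (i + 1) * ↑(i + 1) * ↑((N + 1).choose (i + 1)) =
      -(N + 1) * ((-1) ^ i * N.choose i) := by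
    have := congrArg (Nat.cast (R := ℝ)) (Nat.add_one_mul_choose_eq N i)
    push_cast at this ⊢
    linear_combination (-1 : ℝ) ^ i * this
  rw [Finset.sum_congr rfl fun i _ => hshift i, ← Finset.mul_sum,
    sum_range_neg_one_pow_mul_choose (by omega : N < m)]
  rcases eq_or_ne N 0 with rfl | hN <;> simp [*]

def fixWeight (i : ℕ) : ℝ := (-1) ^ i * (1 - i) / i !

def twoCycleWeight (j : ℕ) : ℝ := (-1 / 2) ^ j / j !

theorem sum_range_fixWeight_mul_descFactorial {F m : ℕ} (h : F < m) :
    ∑ i ∈ range m, fixWeight i * F.descFactorial i = if F ≤ 1 then 1 else 0 := by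
  have hterm (i : ℕ) : fixWeight i * F.descFactorial i =
      (-1) ^ i * F.choose i - (-1) ^ i * i * F.choose i := by
    rw [fixWeight, Nat.descFactorial_eq_factorial_mul_choose, Nat.cast_mul]
    field_simp
  simp only [hterm, Finset.sum_sub_distrib, sum_range_neg_one_pow_mul_choose h,
    sum_range_neg_one_pow_mul_mul_choose h]
  rcases F with _ | _ | F <;> simp

theorem sum_range_twoCycleWeight_mul_descFactorial {T m : ℕ} (h : T < m) :
    ∑ j ∈ range m, twoCycleWeight j * (T.descFactorial j * 2 ^ j) =
      if T = 0 then 1 else 0 := by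
  have hterm (j : ℕ) : twoCycleWeight j * (T.descFactorial j * 2 ^ j) = (-1) ^ j * T.choose j := by
    rw [twoCycleWeight, Nat.descFactorial_eq_factorial_mul_choose, Nat.cast_mul, div_pow]
    field_simp
  simp only [hterm, sum_range_neg_one_pow_mul_choose h]

section Counting

variable {n : ℕ}

open scoped Classical in
theorem indicator_not_hasInvariantSet_two (π : Perm (Fin n)) :
    (if hasInvariantSet n 2 π then 0 else 1 : ℝ) =
      ∑ i ∈ range (n + 1), ∑ j ∈ range (n + 1), fixWeight i * twoCycleWeight j *
        Nat.card {u : Fin i ⊕ Fin j × Bool ↪ Fin n // Semiconj u (modelInvolution _ _) π} := by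
  have hle (s : Set (Fin n)) : Nat.card s < n + 1 :=
    Nat.lt_succ_of_le ((Finite.card_subtype_le (· ∈ s)).trans_eq (Nat.card_fin n))
  simp only [card_semiconj_modelInvolution, Nat.card_fin, Nat.cast_mul, Nat.cast_pow,
    Nat.cast_ofNat]
  calc (if hasInvariantSet n 2 π then 0 else 1 : ℝ)
      = (∑ i ∈ range (n + 1), fixWeight i * (Nat.card (fixedPoints π)).descFactorial i) *
        ∑ j ∈ range (n + 1), twoCycleWeight j *
          ((Nat.card (twoCyclePts π) / 2).descFactorial j * 2 ^ j) := by
        rw [sum_range_fixWeight_mul_descFactorial (hle _),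
          sum_range_twoCycleWeight_mul_descFactorial ((Nat.div_le_self _ 2).trans_lt (hle _)),
          ite_zero_mul_ite_zero, mul_one]
        by_cases h : hasInvariantSet n 2 π
        · have := (hasInvariantSet_two_iff π).1 h
          rw [if_pos h, if_neg (by omega)]
        · have := (hasInvariantSet_two_iff π).not.1 h
          rw [if_neg h, if_pos (by omega)]
    _ = _ := by
        rw [Finset.sum_mul_sum]
        refine Finset.sum_congr rfl fun i _ => Finset.sum_congr rfl fun j _ => ?_
        ring

theorem sum_card_semiconj_modelInvolution_div (i j : ℕ) :
    ∑ π : Perm (Fin n),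
        (Nat.card {u : Fin i ⊕ Fin j × Bool ↪ Fin n // Semiconj u (modelInvolution _ _) π} : ℝ) /
          n ! = if i + 2 * j ≤ n then 1 else 0 := by
  have hD : Nat.card (Fin i ⊕ Fin j × Bool) = i + 2 * j := by
    rw [Nat.card_sum, Nat.card_prod, Nat.card_fin, Nat.card_fin,
      Nat.card_eq_fintype_card (α := Bool), Fintype.card_bool, mul_comm]
  rw [← Finset.sum_div, ← Nat.cast_sum, sum_card_semiconj, hD, Nat.card_fin]
  split_ifs with h
  · rw [mul_comm, Nat.factorial_mul_descFactorial h, div_self (by positivity)]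
  · rw [Nat.descFactorial_eq_zero_iff_lt.2 (by omega), zero_mul, Nat.cast_zero, zero_div]

def region (n : ℕ) : Finset (ℕ × ℕ) :=
  (range (n + 1) ×ˢ range (n + 1)).filter fun p => p.1 + 2 * p.2 ≤ n

theorem iProp_two_eq (n : ℕ) :
    iProp n 2 = 1 - ∑ p ∈ region n, fixWeight p.1 * twoCycleWeight p.2 := by
  classical
  have hcard : (Nat.card (Perm (Fin n)) : ℝ) = n ! := by rw [Nat.card_perm, Nat.card_fin]
  calc iProp n 2
      = 1 - (∑ π : Perm (Fin n), if hasInvariantSet n 2 π then 0 else 1 : ℝ) / n ! := by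
        rw [iProp, hcard, eq_sub_iff_add_eq, ← add_div, div_eq_one_iff_eq (by positivity),
          Nat.card_eq_fintype_card, Fintype.card_subtype, ← Finset.sum_boole, ← sum_add_distrib]
        have hone (π : Perm (Fin n)) : ((if hasInvariantSet n 2 π then 1 else 0) +
            if hasInvariantSet n 2 π then 0 else 1 : ℝ) = 1 := by split_ifs <;> norm_num
        rw [sum_congr rfl fun π _ => hone π, sum_const, nsmul_one, Finset.card_univ,
          ← Nat.card_eq_fintype_card, hcard]
    _ = 1 - ∑ i ∈ range (n + 1), ∑ j ∈ range (n + 1), fixWeight i * twoCycleWeight j *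
          ∑ π : Perm (Fin n), (Nat.card {u : Fin i ⊕ Fin j × Bool ↪ Fin n //
            Semiconj u (modelInvolution _ _) π} : ℝ) / n ! := by
        simp only [indicator_not_hasInvariantSet_two, Finset.sum_div, Finset.mul_sum]
        rw [Finset.sum_comm]
        refine congrArg _ (sum_congr rfl fun i _ => ?_)
        rw [Finset.sum_comm]
        exact sum_congr rfl fun j _ => sum_congr rfl fun π _ => mul_div_assoc _ _ _
    _ = _ := by
        simp only [sum_card_semiconj_modelInvolution_div, region, Finset.sum_filter,
          Finset.sum_product, mul_ite, mul_one, mul_zero]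

end Counting

section Limit

open Filter Topology

theorem Real.hasSum_pow_div_factorial (x : ℝ) : HasSum (fun n => x ^ n / n !) (Real.exp x) := by
  rw [Real.exp_eq_exp_ℝ]
  exact NormedSpace.expSeries_div_hasSum_exp x

theorem hasSum_fixWeight : HasSum fixWeight (2 * Real.exp (-1)) := by
  have hexp := Real.hasSum_pow_div_factorial (-1)
  -- The shift `i ↦ i + 1` turns `(-1)^i * i / i!` into `-((-1)^i / i!)`.
  have hweighted : HasSum (fun i : ℕ => (-1 : ℝ) ^ i * i / i !) (-Real.exp (-1)) := by
    rw [← hasSum_nat_add_iff' 1]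
    convert hexp.neg using 1
    · ext i
      rw [Nat.factorial_succ]
      push_cast
      field_simp
      ring
    · simp
  have hsplit : fixWeight = fun i => (-1 : ℝ) ^ i / (i ! : ℝ) - (-1) ^ i * i / i ! := by
    funext i
    unfold fixWeight
    ring
  rw [hsplit, two_mul, ← sub_neg_eq_add]
  exact hexp.sub hweighted

theorem hasSum_twoCycleWeight : HasSum twoCycleWeight (Real.exp (-1 / 2)) :=
  Real.hasSum_pow_div_factorial _

theorem tendsto_sum_region_mul {a b : ℕ → ℝ} {A B : ℝ} (ha : HasSum a A) (hb : HasSum b B) :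
    Tendsto (fun n => ∑ p ∈ region n, a p.1 * b p.2) atTop (𝓝 (A * B)) := by
  have hsum : Summable fun p : ℕ × ℕ => a p.1 * b p.2 :=
    summable_mul_of_summable_norm (by simpa using ha.summable.abs) (by simpa using hb.summable.abs)
  refine (ha.mul hb hsum).comp (tendsto_atTop_finset_of_monotone ?_ ?_)
  · intro m m' h p
    simp only [region, Finset.mem_filter, Finset.mem_product, Finset.mem_range]
    omega
  · intro p
    refine ⟨p.1 + 2 * p.2, ?_⟩
    simp only [region, Finset.mem_filter, Finset.mem_product, Finset.mem_range]
    omega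

end Limit

theorem i_infty_two :
    Filter.Tendsto (fun n => iProp n 2) Filter.atTop
      (nhds (1 - 2 * Real.exp (-(3/2 : ℝ)))) := by
  have hlim := tendsto_sum_region_mul hasSum_fixWeight hasSum_twoCycleWeight
  rw [mul_assoc, ← Real.exp_add] at hlim
  norm_num at hlim
  simpa only [iProp_two_eq] using hlim.const_sub 1
end
end

section
/- For all positive integers k and r, one has the identity: the sum over all non-negative integers c_1,…,c_k with c_1 + … + c_k = r of |𝓛(c)| / ∏_{i=1}^k (c_i! · i^{c_i}) equals (1/r!) times the sum over all tuples (a_1,…,a_r) ∈ {1,…,k}^r of |𝓛*(a)| / (a_1 ⋯ a_r). -/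
/-!
Group the tuples `a : Fin r → Fin k` by their fibre counts `c j = #{x | a x = j}`. The subset
sums of `(a x + 1)ₓ` are exactly the sums `∑ (j + 1) m_j` with `m ≤ c` (pick `m_j` points of the
`j`-th fibre), and `∏ (a x + 1) = ∏ (j + 1) ^ c j`, so the summand of `a` on the right depends
only on `c`. Exactly `r! / ∏ c_j!` tuples have counts `c` (read off as the coefficient of `X ^ c`
in `(∑ X_j) ^ r`), which turns the right-hand side into the left-hand side.
-/

open scoped BigOperators

noncomputable section

/-- The set `𝓛*(a) = { Σ_{i∈I} a_i : I ⊆ {1,…,r} }` of subset sums of `a`. -/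
def Lstar (r : ℕ) (a : Fin r → ℕ) : Finset ℕ :=
  (Finset.univ : Finset (Finset (Fin r))).image fun I => ∑ i ∈ I, a i

open Finset MvPolynomial

@[to_additive]
lemma prod_comp_eq_prod_pow_card_fiber {ι κ M : Type*} [DecidableEq κ] [Fintype κ] [CommMonoid M]
    (s : Finset ι) (a : ι → κ) (g : κ → M) : ∏ x ∈ s, g (a x) = ∏ j, g j ^ #{x ∈ s | a x = j} := by
  rw [← prod_fiberwise s a fun x ↦ g (a x)]
  exact prod_congr rfl fun j _ ↦ prod_eq_pow_card fun x hx ↦ by rw [(mem_filter.1 hx).2]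

section FiberCard

variable {ι κ : Type*} [Fintype ι] [DecidableEq κ]

def fiberCard (a : ι → κ) (j : κ) : ℕ := #{x | a x = j}

lemma sum_fiberCard [Fintype κ] (a : ι → κ) : ∑ j, fiberCard a j = Fintype.card ι :=
  (card_eq_sum_card_fiberwise fun x _ ↦ mem_univ (a x)).symm

lemma sum_single_apply_eq_fiberCard (a : ι → κ) (j : κ) :
    (∑ x, Finsupp.single (a x) 1 : κ →₀ ℕ) j = fiberCard a j := by
  simp [Finsupp.finsetSum_apply, Finsupp.single_apply, fiberCard]

variable [DecidableEq ι] [Fintype κ]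

lemma card_filter_fiberCard_eq (c : κ → ℕ) (hc : ∑ j, c j = Fintype.card ι) :
    #{a : ι → κ | fiberCard a = c} = Nat.multinomial univ c := by
  set d : κ →₀ ℕ := Finsupp.equivFunOnFinite.symm c
  have hd : d.sum (fun _ m ↦ m) = Fintype.card ι := by
    rwa [Finsupp.sum_fintype _ _ fun _ ↦ rfl]
  have hexpand : (∑ j, X j : MvPolynomial κ ℕ) ^ Fintype.card ι =
      ∑ a : ι → κ, monomial (∑ x, Finsupp.single (a x) 1) 1 := by
    rw [← Finset.card_univ, ← prod_const, prod_univ_sum]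
    simp [monomial_sum_one, X]
  have hcoeff := coeff_sum_X_pow_of_fintype (R := ℕ) d (Fintype.card ι)
  rw [if_pos hd, Finsupp.multinomial_eq_of_support_subset (subset_univ _), hexpand, coeff_sum,
    Nat.cast_id, Finsupp.coe_equivFunOnFinite_symm] at hcoeff
  rw [← hcoeff, card_filter]
  refine sum_congr rfl fun a _ ↦ ?_
  rw [coeff_monomial]
  congr 1
  simp only [d, Finsupp.ext_iff, funext_iff, sum_single_apply_eq_fiberCard,
    Finsupp.coe_equivFunOnFinite_symm]

lemma sum_comp_fiberCard {M : Type*} [AddCommMonoid M] (F : (κ → ℕ) → M) :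
    ∑ a : ι → κ, F (fiberCard a) =
      ∑ c ∈ piAntidiag univ (Fintype.card ι), Nat.multinomial univ c • F c := by
  rw [← sum_fiberwise_of_maps_to (g := fiberCard) (t := piAntidiag univ (Fintype.card ι))
    fun a _ ↦ mem_piAntidiag.2 ⟨sum_fiberCard a, fun _ _ ↦ mem_univ _⟩]
  refine sum_congr rfl fun c hc ↦ ?_
  rw [sum_eq_card_nsmul fun a ha ↦ by rw [(mem_filter.1 ha).2],
    card_filter_fiberCard_eq c (mem_piAntidiag.1 hc).1]

end FiberCard

lemma sum_val_add_one_eq_sum_mul_card_fiber {r k : ℕ} (a : Fin r → Fin k) (I : Finset (Fin r)) :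
    ∑ x ∈ I, ((a x : ℕ) + 1) = ∑ j : Fin k, ((j : ℕ) + 1) * #{x ∈ I | a x = j} := by
  rw [sum_comp_eq_sum_nsmul_card_fiber I a fun j ↦ (j : ℕ) + 1]
  simp only [smul_eq_mul, mul_comm]

lemma Lstar_eq_Lset_fiberCard {r k : ℕ} (a : Fin r → Fin k) :
    Lstar r (fun x ↦ (a x : ℕ) + 1) = Lset k (fiberCard a) := by
  ext n
  simp only [Lstar, Lset, mem_image, mem_univ, true_and, mem_Icc, sum_val_add_one_eq_sum_mul_card_fiber]
  constructor
  · rintro ⟨I, rfl⟩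
    exact ⟨fun j ↦ #{x ∈ I | a x = j},
      ⟨fun _ ↦ Nat.zero_le _, fun _ ↦ card_le_card (filter_subset_filter _ (subset_univ I))⟩, rfl⟩
  · rintro ⟨m, ⟨-, hm⟩, rfl⟩
    choose S hS hScard using fun j ↦ exists_subset_card_eq (hm j)
    refine ⟨({x | x ∈ S (a x)} : Finset _), sum_congr rfl fun j _ ↦ ?_⟩
    rw [← hScard j]
    congr 2
    ext x
    simp only [mem_filter]
    refine ⟨fun ⟨⟨_, hx⟩, hj⟩ ↦ hj ▸ hx, fun hx ↦ ?_⟩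
    have hj : a x = j := (mem_filter.1 (hS j hx)).2
    exact ⟨⟨mem_univ x, hj ▸ hx⟩, hj⟩

theorem sum_Lset_eq_sum_Lstar_general (k r : ℕ) :
    ∑ c ∈ Finset.Nat.antidiagonalTuple k r,
        ((Lset k c).card : ℝ) /
          ∏ i : Fin k, ((Nat.factorial (c i) * ((i : ℕ) + 1) ^ (c i) : ℕ) : ℝ) =
      (1 / (Nat.factorial r : ℝ)) *
        ∑ a : Fin r → Fin k,
          ((Lstar r fun i => (a i : ℕ) + 1).card : ℝ) / ∏ i : Fin r, ((a i : ℕ) + 1 : ℝ) := by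
  let F : (Fin k → ℕ) → ℝ := fun c ↦ (#(Lset k c) : ℝ) / ∏ j : Fin k, ((j : ℕ) + 1 : ℝ) ^ c j
  have hterm (a : Fin r → Fin k) :
      ((Lstar r fun i => (a i : ℕ) + 1).card : ℝ) / ∏ i : Fin r, ((a i : ℕ) + 1 : ℝ) =
        F (fiberCard a) := by
    rw [Lstar_eq_Lset_fiberCard, prod_comp_eq_prod_pow_card_fiber univ a fun j ↦ ((j : ℕ) + 1 : ℝ)]
    rfl
  rw [sum_congr rfl fun a _ ↦ hterm a, sum_comp_fiberCard F, Fintype.card_fin,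
    piAntidiag_univ_fin_eq_antidiagonalTuple, mul_sum]
  refine sum_congr rfl fun c hc ↦ ?_
  have hspec := Nat.multinomial_spec univ c
  rw [Nat.mem_antidiagonalTuple.1 hc] at hspec
  rw [← hspec, nsmul_eq_mul]
  dsimp only [F]
  have hmult : (Nat.multinomial univ c : ℝ) ≠ 0 := Nat.cast_ne_zero.2 (Nat.multinomial_pos _ _).ne'
  push_cast
  rw [prod_mul_distrib]
  field_simp

theorem sum_Lset_eq_sum_Lstar (k r : ℕ) (hk : 1 ≤ k) (hr : 1 ≤ r) :
    ∑ c ∈ Finset.Nat.antidiagonalTuple k r,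
        ((Lset k c).card : ℝ) /
          ∏ i : Fin k, ((Nat.factorial (c i) * ((i : ℕ) + 1) ^ (c i) : ℕ) : ℝ) =
      (1 / (Nat.factorial r : ℝ)) *
        ∑ a : Fin r → Fin k,
          ((Lstar r fun i => (a i : ℕ) + 1).card : ℝ) / ∏ i : Fin r, ((a i : ℕ) + 1 : ℝ) :=
  sum_Lset_eq_sum_Lstar_general k r
end
end

section
/- There is an absolute constant c > 0 such that for every positive integer J and every vector b = (b_1,…,b_J) of non-negative integers with b_1 + … + b_J = J, one has Σ_{d ∈ D(b)} |𝓛*(d)| / (d_1 ⋯ d_J) ≥ c · (2 log 2)^J / ( Σ_{i=1}^J 2^{b_1 + … + b_i - i} ), where D(b) = ∏_{i=1}^J {2^{i-1}, 2^{i-1}+1, …, 2^i - 1}^{b_i} is the set of J-tuples d = (d_1,…,d_J) whose first b_1 coordinates lie in [1,1], next b_2 coordinates lie in [2,3], and in general whose coordinates indexed by positions b_1+…+b_{i-1}+1 through b_1+…+b_i lie in [2^{i-1}, 2^i - 1]. -/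
/-!
Weight `d` by `w(d) = 1 / ∏ d_p`, so that `∑_{d ∈ D(b)} w(d) = ∏_p H(ℓ p) ≥ (log 2)^J`, where
`ℓ p` is the block of coordinate `p` and `H(i) = ∑_{2^i ≤ x < 2^(i+1)} 1/x ≥ log 2`. Let `R(d)`
count pairs `(I, I')` of index sets with equal `d`-sums. Cauchy–Schwarz over the fibres of
`I ↦ ∑_I d` gives `4^J ≤ |𝓛*(d)| R(d)`, so a weighted Cauchy–Schwarz bounds `∑_d w(d) |𝓛*(d)|`
below by `(2^J ∏ H)^2 / ∑_d w(d) R(d)`.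

For a pair `I ≠ I'`, choose `q ∈ I ∆ I'` of maximal level: the equation `∑_I d = ∑_I' d` fixes
`d_q` once the other coordinates are chosen, so its solutions have weight at most
`2^(-ℓ q) ∏_(p ≠ q) H(ℓ p) ≤ 2^(-ℓ q) ∏ H / log 2`. As `I'` runs over all sets so does
`C = I ∆ I'`, and the sets `C` of maximal level `i` lie inside `{p | ℓ p ≤ i}`, which has
`b_1 + ⋯ + b_(i+1)` elements; summing `2^(-i)` over them produces the denominator.
-/

open scoped BigOperators

noncomputable section

/-- The set `D(b) = ∏_{i=1}^J {2^{i-1},…,2^i-1}^{b_i}`, with the tuple indexed as a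
dependent function assigning, to each block `i` (0-indexed), `b i` coordinates lying in
`[2^i, 2^{i+1}-1]`. -/
def Dset (J : ℕ) (b : Fin J → ℕ) : Finset ((i : Fin J) → Fin (b i) → ℕ) :=
  Fintype.piFinset fun i : Fin J =>
    Fintype.piFinset fun _ : Fin (b i) =>
      Finset.Icc (2 ^ (i : ℕ)) (2 ^ ((i : ℕ) + 1) - 1)

/-- The set `𝓛*(d)` of subset sums of the (J-coordinate) tuple `d`. -/
def LstarD (J : ℕ) (b : Fin J → ℕ) (d : (i : Fin J) → Fin (b i) → ℕ) : Finset ℕ :=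
  (Finset.univ : Finset (Finset ((i : Fin J) × Fin (b i)))).image fun I =>
    ∑ p ∈ I, d p.1 p.2

open Finset Real
open scoped symmDiff

def dyadicBlock (k : ℕ) : Finset ℕ := Icc (2 ^ k) (2 ^ (k + 1) - 1)

def dyadicHarmonicSum (k : ℕ) : ℝ := ∑ x ∈ dyadicBlock k, (x : ℝ)⁻¹

lemma dyadicBlock_eq_image_range (k : ℕ) :
    dyadicBlock k = (range (2 ^ k)).image (2 ^ k + ·) := by
  ext x
  simp only [dyadicBlock, mem_Icc, mem_image, mem_range, pow_succ]
  have hpos : 0 < 2 ^ k := by positivity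
  generalize 2 ^ k = m at hpos ⊢
  constructor
  · rintro ⟨h1, h2⟩; exact ⟨x - m, by omega, by omega⟩
  · rintro ⟨i, hi, rfl⟩; omega

lemma log_two_le_dyadicHarmonicSum (k : ℕ) : log 2 ≤ dyadicHarmonicSum k := by
  have hanti : AntitoneOn (fun x : ℝ => x⁻¹) (Set.Icc (2 ^ k) (2 ^ k + (2 ^ k : ℕ))) :=
    (inv_antitoneOn_Ioi (α := ℝ)).mono fun x hx => lt_of_lt_of_le (by positivity) hx.1
  calc log 2 = ∫ x in (2 ^ k : ℝ)..2 ^ k + (2 ^ k : ℕ), x⁻¹ := by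
        rw [integral_inv_of_pos (by positivity) (by positivity)]
        congr 1; push_cast; field_simp; norm_num
    _ ≤ ∑ i ∈ range (2 ^ k), ((2 : ℝ) ^ k + i)⁻¹ := hanti.integral_le_sum
    _ = dyadicHarmonicSum k := by
        rw [dyadicHarmonicSum, dyadicBlock_eq_image_range, sum_image (by simp)]
        push_cast; rfl

lemma dyadicHarmonicSum_pos (k : ℕ) : 0 < dyadicHarmonicSum k :=
  (log_pos one_lt_two).trans_le (log_two_le_dyadicHarmonicSum k)

lemma sq_card_le_card_image_mul_card_collisions {α β : Type*} [DecidableEq β]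
    (s : Finset α) (φ : α → β) :
    #s ^ 2 ≤ #(s.image φ) * #{xy ∈ s ×ˢ s | φ xy.1 = φ xy.2} := by
  have hfiber : ∀ c ∈ s.image φ,
      #{xy ∈ s ×ˢ s | φ xy.1 = φ xy.2 ∧ φ xy.1 = c} = #{x ∈ s | φ x = c} ^ 2 := by
    intro c _
    rw [sq, ← card_product, ← filter_product]
    congr 1
    ext ⟨x, y⟩
    simp only [mem_filter, mem_product]
    exact and_congr_right fun _ =>
      ⟨fun ⟨h, hc⟩ => ⟨hc, h ▸ hc⟩, fun ⟨hx, hy⟩ => ⟨hx.trans hy.symm, hx⟩⟩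
  calc #s ^ 2 = (∑ c ∈ s.image φ, #{x ∈ s | φ x = c}) ^ 2 := by
        rw [← card_eq_sum_card_image]
    _ ≤ #(s.image φ) * ∑ c ∈ s.image φ, #{x ∈ s | φ x = c} ^ 2 := sq_sum_le_card_mul_sum_sq
    _ = #(s.image φ) * #{xy ∈ s ×ˢ s | φ xy.1 = φ xy.2} := by
        rw [card_eq_sum_card_fiberwise (f := fun xy => φ xy.1) (t := s.image φ)
          fun xy hxy => mem_image_of_mem φ (mem_product.1 (mem_filter.1 hxy).1).1,
          ← sum_congr rfl hfiber]
        simp only [filter_filter]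

lemma sum_sq_le_sum_mul_sum_of_sq_le_mul_weighted {κ : Type*} (s : Finset κ) {w x y z : κ → ℝ}
    (hw : ∀ i ∈ s, 0 ≤ w i) (hy : ∀ i ∈ s, 0 ≤ y i) (hz : ∀ i ∈ s, 0 ≤ z i)
    (hxyz : ∀ i ∈ s, x i ^ 2 ≤ y i * z i) :
    (∑ i ∈ s, w i * x i) ^ 2 ≤ (∑ i ∈ s, w i * y i) * ∑ i ∈ s, w i * z i :=
  sum_sq_le_sum_mul_sum_of_sq_le_mul s (fun i hi => mul_nonneg (hw i hi) (hy i hi))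
    (fun i hi => mul_nonneg (hw i hi) (hz i hi)) fun i hi => by
      rw [mul_pow, mul_mul_mul_comm, ← sq]
      exact mul_le_mul_of_nonneg_left (hxyz i hi) (sq_nonneg _)

lemma sum_prod_erase_le_prod_sum_of_injOn {ι : Type*} [Fintype ι] [DecidableEq ι]
    {t : ι → Finset ℕ} {g : ι → ℕ → ℝ} (hg : ∀ p x, 0 ≤ g p x) {F : Finset (ι → ℕ)}
    (hF : F ⊆ Fintype.piFinset t) (q : ι)
    (hinj : ∀ d ∈ F, ∀ d' ∈ F, (∀ p ≠ q, d p = d' p) → d = d') :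
    ∑ d ∈ F, ∏ p ∈ univ.erase q, g p (d p) ≤ ∏ p ∈ univ.erase q, ∑ x ∈ t p, g p x := by
  let g' : ι → ℕ → ℝ := Function.update g q fun _ => 1
  -- resetting `d q` to `0` is injective on `F`, and on the reset box `g'` ignores coordinate `q`
  let reset : (ι → ℕ) → ι → ℕ := fun d => Function.update d q 0
  have hg' (e : ι → ℕ) : ∏ p, g' p (e p) = ∏ p ∈ univ.erase q, g p (e p) := by
    rw [← mul_prod_erase univ _ (mem_univ q)]
    simp only [g', Function.update_self, one_mul]
    exact prod_congr rfl fun p hp => by rw [Function.update_of_ne (ne_of_mem_erase hp)]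
  calc ∑ d ∈ F, ∏ p ∈ univ.erase q, g p (d p)
      = ∑ d ∈ F, ∏ p, g' p (reset d p) := by
        refine sum_congr rfl fun d _ => ?_
        rw [hg']
        exact prod_congr rfl fun p hp => by simp [reset, ne_of_mem_erase hp]
    _ = ∑ e ∈ F.image reset, ∏ p, g' p (e p) := by
        rw [sum_image fun d hd d' hd' h => hinj d hd d' hd' fun p hp => ?_]
        simpa [reset, hp] using congrFun h p
    _ ≤ ∑ e ∈ Fintype.piFinset (Function.update t q {0}), ∏ p, g' p (e p) := by
        refine sum_le_sum_of_subset_of_nonneg ?_ fun e _ _ =>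
          prod_nonneg fun p _ => by by_cases hp : p = q <;> simp [g', hp, hg]
        rintro _ he
        obtain ⟨d, hd, rfl⟩ := mem_image.1 he
        refine Fintype.mem_piFinset.2 fun p => ?_
        by_cases hp : p = q
        · subst hp; simp [reset]
        · simpa [reset, hp] using Fintype.mem_piFinset.1 (hF hd) p
    _ = ∏ p ∈ univ.erase q, ∑ x ∈ t p, g p x := by
        rw [← prod_univ_sum, ← mul_prod_erase univ _ (mem_univ q)]
        simp only [g', Function.update_self, sum_singleton, one_mul]
        exact prod_congr rfl fun p hp => by simp only [Function.update_of_ne (ne_of_mem_erase hp)]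

section DyadicBox

variable {ι : Type*} [Fintype ι] (ℓ : ι → ℕ)

def subsetSums (d : ι → ℕ) : Finset ℕ := univ.image fun I : Finset ι => ∑ p ∈ I, d p

def subsetSumCollisions (d : ι → ℕ) : ℕ :=
  #{IJ : Finset ι × Finset ι | ∑ p ∈ IJ.1, d p = ∑ p ∈ IJ.2, d p}

lemma sq_two_pow_card_le_card_subsetSums_mul (d : ι → ℕ) :
    (2 ^ Fintype.card ι) ^ 2 ≤ #(subsetSums d) * subsetSumCollisions d := by
  simpa [subsetSums, subsetSumCollisions] using
    sq_card_le_card_image_mul_card_collisions (univ : Finset (Finset ι))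
      fun I => ∑ p ∈ I, d p

lemma sum_inv_two_pow_sup_le {J : ℕ} (hJ : 0 < J) (hℓ : ∀ p, ℓ p < J) :
    ∑ C : Finset ι, ((2 : ℝ) ^ C.sup ℓ)⁻¹ ≤
      ∑ i ∈ range J, (2 : ℝ) ^ #{p | ℓ p ≤ i} / 2 ^ i := by
  rw [← sum_fiberwise_of_maps_to (g := fun C : Finset ι => C.sup ℓ) (t := range J)
    fun C _ => mem_range.2 ((Finset.sup_lt_iff hJ).2 fun p _ => hℓ p)]
  refine sum_le_sum fun i _ => ?_
  have hcard : #{C : Finset ι | C.sup ℓ = i} ≤ 2 ^ #{p | ℓ p ≤ i} := by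
    rw [← card_powerset]
    refine card_le_card fun C hC => mem_powerset.2 fun p hp => ?_
    exact mem_filter.2 ⟨mem_univ p, (mem_filter.1 hC).2 ▸ le_sup hp⟩
  rw [sum_congr rfl fun C hC => by rw [(mem_filter.1 hC).2], sum_const, nsmul_eq_mul,
    div_eq_mul_inv]
  gcongr
  exact_mod_cast hcard

variable [DecidableEq ι]

def dyadicBox : Finset (ι → ℕ) := Fintype.piFinset fun p => dyadicBlock (ℓ p)

lemma sum_dyadicBox_prod_inv :
    ∑ d ∈ dyadicBox ℓ, ∏ p, (d p : ℝ)⁻¹ = ∏ p, dyadicHarmonicSum (ℓ p) :=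
  (prod_univ_sum (fun p => dyadicBlock (ℓ p)) fun _ x => (x : ℝ)⁻¹).symm

lemma sum_filter_subsetSum_eq_le_of_mem_of_notMem {I I' : Finset ι} {q : ι} (hqI : q ∈ I)
    (hqI' : q ∉ I') :
    ∑ d ∈ dyadicBox ℓ with ∑ p ∈ I, d p = ∑ p ∈ I', d p, ∏ p, (d p : ℝ)⁻¹ ≤
      ((2 : ℝ) ^ ℓ q)⁻¹ * ∏ p ∈ univ.erase q, dyadicHarmonicSum (ℓ p) := by
  set F := {d ∈ dyadicBox ℓ | ∑ p ∈ I, d p = ∑ p ∈ I', d p}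
  have hinj : ∀ d ∈ F, ∀ d' ∈ F, (∀ p ≠ q, d p = d' p) → d = d' := by
    intro d hd d' hd' hoff
    have hq : d q = d' q := by
      have hI := (mem_filter.1 hd).2
      have hI' := (mem_filter.1 hd').2
      rw [← add_sum_erase I _ hqI] at hI hI'
      rw [sum_congr rfl fun p hp => hoff p (ne_of_mem_erase hp),
        sum_congr rfl fun p hp => hoff p (ne_of_mem_of_not_mem hp hqI')] at hI
      exact Nat.add_right_cancel (hI.trans hI'.symm)
    funext p
    by_cases hp : p = q
    · rw [hp, hq]
    · exact hoff p hp
  calc ∑ d ∈ F, ∏ p, (d p : ℝ)⁻¹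
      ≤ ∑ d ∈ F, ((2 : ℝ) ^ ℓ q)⁻¹ * ∏ p ∈ univ.erase q, (d p : ℝ)⁻¹ := by
        refine sum_le_sum fun d hd => ?_
        rw [← mul_prod_erase univ _ (mem_univ q)]
        have hdq := (mem_Icc.1 (Fintype.mem_piFinset.1 (mem_filter.1 hd).1 q)).1
        gcongr
        exact_mod_cast hdq
    _ ≤ ((2 : ℝ) ^ ℓ q)⁻¹ * ∏ p ∈ univ.erase q, dyadicHarmonicSum (ℓ p) := by
        rw [← mul_sum]
        gcongr
        exact sum_prod_erase_le_prod_sum_of_injOn (g := fun _ x => (x : ℝ)⁻¹)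
          (fun _ _ => by positivity) (filter_subset _ _) q hinj

lemma sum_filter_subsetSum_eq_le (I I' : Finset ι) :
    ∑ d ∈ dyadicBox ℓ with ∑ p ∈ I, d p = ∑ p ∈ I', d p, ∏ p, (d p : ℝ)⁻¹ ≤
      (∏ p, dyadicHarmonicSum (ℓ p)) / log 2 * ((2 : ℝ) ^ (I ∆ I').sup ℓ)⁻¹ := by
  have hlog : 0 < log 2 := log_pos one_lt_two
  have hH : 0 ≤ ∏ p, dyadicHarmonicSum (ℓ p) :=
    prod_nonneg fun p _ => (dyadicHarmonicSum_pos _).le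
  obtain rfl | hne := eq_or_ne I I'
  · calc _ ≤ ∑ d ∈ dyadicBox ℓ, ∏ p, (d p : ℝ)⁻¹ :=
          sum_le_sum_of_subset_of_nonneg (filter_subset _ _) fun _ _ _ => by positivity
      _ = ∏ p, dyadicHarmonicSum (ℓ p) := sum_dyadicBox_prod_inv ℓ
      _ ≤ _ := by
          rw [symmDiff_self, bot_eq_empty, sup_empty, Nat.bot_eq_zero, pow_zero, inv_one,
            mul_one]
          exact le_div_self hH hlog (log_two_lt_d9.le.trans (by norm_num))
  · obtain ⟨q, hq, hqsup⟩ := exists_mem_eq_sup _ (symmDiff_nonempty.2 hne) ℓ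
    have herase : ∏ p ∈ univ.erase q, dyadicHarmonicSum (ℓ p) ≤
        (∏ p, dyadicHarmonicSum (ℓ p)) / log 2 := by
      rw [← mul_prod_erase univ _ (mem_univ q), mul_comm, mul_div_assoc]
      exact le_mul_of_one_le_right (prod_nonneg fun p _ => (dyadicHarmonicSum_pos _).le)
        ((one_le_div hlog).2 (log_two_le_dyadicHarmonicSum _))
    rw [hqsup, mul_comm]
    rcases mem_symmDiff.1 hq with ⟨hqI, hqI'⟩ | ⟨hqI', hqI⟩
    · exact (sum_filter_subsetSum_eq_le_of_mem_of_notMem ℓ hqI hqI').trans (by gcongr)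
    · simp_rw [eq_comm (a := ∑ p ∈ I, _)]
      exact (sum_filter_subsetSum_eq_le_of_mem_of_notMem ℓ hqI' hqI).trans (by gcongr)

lemma sum_prod_inv_mul_subsetSumCollisions_le :
    ∑ d ∈ dyadicBox ℓ, (∏ p, (d p : ℝ)⁻¹) * subsetSumCollisions d ≤
      2 ^ Fintype.card ι * ((∏ p, dyadicHarmonicSum (ℓ p)) / log 2) *
        ∑ C : Finset ι, ((2 : ℝ) ^ C.sup ℓ)⁻¹ := by
  calc _ = ∑ IJ : Finset ι × Finset ι,
        ∑ d ∈ dyadicBox ℓ with ∑ p ∈ IJ.1, d p = ∑ p ∈ IJ.2, d p, ∏ p, (d p : ℝ)⁻¹ := by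
        simp_rw [subsetSumCollisions, card_filter, Nat.cast_sum, mul_sum, sum_filter]
        rw [sum_comm]
        simp [Nat.cast_ite]
    _ ≤ ∑ IJ : Finset ι × Finset ι,
        (∏ p, dyadicHarmonicSum (ℓ p)) / log 2 * ((2 : ℝ) ^ (IJ.1 ∆ IJ.2).sup ℓ)⁻¹ :=
        sum_le_sum fun IJ _ => sum_filter_subsetSum_eq_le ℓ IJ.1 IJ.2
    _ = _ := by
        have hshift (I : Finset ι) :
            ∑ I', ((2 : ℝ) ^ (I ∆ I').sup ℓ)⁻¹ = ∑ C : Finset ι, ((2 : ℝ) ^ C.sup ℓ)⁻¹ :=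
          Equiv.sum_comp ((symmDiff_right_involutive I).toPerm _)
            fun C => ((2 : ℝ) ^ C.sup ℓ)⁻¹
        simp_rw [Fintype.sum_prod_type, ← mul_sum, hshift, sum_const, card_univ,
          Fintype.card_finset, nsmul_eq_mul]
        push_cast
        ring

lemma two_pow_card_mul_prod_mul_log_two_le :
    2 ^ Fintype.card ι * (∏ p, dyadicHarmonicSum (ℓ p)) * log 2 ≤
      (∑ d ∈ dyadicBox ℓ, (∏ p, (d p : ℝ)⁻¹) * #(subsetSums d)) *
        ∑ C : Finset ι, ((2 : ℝ) ^ C.sup ℓ)⁻¹ := by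
  set X := 2 ^ Fintype.card ι * ∏ p, dyadicHarmonicSum (ℓ p)
  have hX : 0 < X := mul_pos (by positivity) (prod_pos fun p _ => dyadicHarmonicSum_pos _)
  have hlog : 0 < log 2 := log_pos one_lt_two
  have hCS : X ^ 2 ≤ (∑ d ∈ dyadicBox ℓ, (∏ p, (d p : ℝ)⁻¹) * #(subsetSums d)) *
      ∑ d ∈ dyadicBox ℓ, (∏ p, (d p : ℝ)⁻¹) * subsetSumCollisions d := by
    have hX_eq : X = ∑ d ∈ dyadicBox ℓ, (∏ p, (d p : ℝ)⁻¹) * 2 ^ Fintype.card ι := by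
      rw [← sum_mul, sum_dyadicBox_prod_inv, mul_comm]
    rw [hX_eq]
    refine sum_sq_le_sum_mul_sum_of_sq_le_mul_weighted _ (fun _ _ => by positivity)
      (fun _ _ => by positivity) (fun _ _ => by positivity) fun d _ => ?_
    exact_mod_cast sq_two_pow_card_le_card_subsetSums_mul d
  refine le_of_mul_le_mul_left ?_ (div_pos hX hlog)
  calc X / log 2 * (X * log 2) = X ^ 2 := by field_simp
    _ ≤ _ := hCS.trans (mul_le_mul_of_nonneg_left (sum_prod_inv_mul_subsetSumCollisions_le ℓ)
          (sum_nonneg fun _ _ => by positivity))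
    _ = _ := by ring

end DyadicBox

lemma sum_Dset_eq_sum_dyadicBox (J : ℕ) (b : Fin J → ℕ) :
    ∑ d ∈ Dset J b, ((LstarD J b d).card : ℝ) / ∏ i : Fin J, ∏ t : Fin (b i), (d i t : ℝ) =
      ∑ d ∈ dyadicBox fun p : (i : Fin J) × Fin (b i) => (p.1 : ℕ),
        (∏ p, (d p : ℝ)⁻¹) * #(subsetSums d) := by
  refine (sum_equiv (Equiv.piCurry fun _ _ => ℕ) (fun d => ?_) fun d _ => ?_).symm
  · simp [dyadicBox, Dset, dyadicBlock, Fintype.mem_piFinset, Sigma.forall, Sigma.curry]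
  · rw [div_eq_mul_inv, ← Fintype.prod_sigma', ← prod_inv_distrib, mul_comm]
    rfl

lemma card_filter_fst_le {J : ℕ} (b : Fin J → ℕ) (i : Fin J) :
    #{p : (i : Fin J) × Fin (b i) | (p.1 : ℕ) ≤ i} =
      ∑ j ∈ univ.filter fun j : Fin J => j ≤ i, b j := by
  rw [card_filter, Fintype.sum_sigma, sum_filter]
  simp

lemma two_pow_div_two_pow_eq_two_mul_rpow (m n : ℕ) :
    (2 : ℝ) ^ m / 2 ^ n = 2 * (2 : ℝ) ^ ((m : ℝ) - (n + 1)) := by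
  rw [rpow_sub two_pos, rpow_add two_pos, rpow_natCast, rpow_natCast, rpow_one]
  field_simp

theorem lower_bound_Dsum :
    ∃ c : ℝ, 0 < c ∧ ∀ (J : ℕ), 0 < J → ∀ b : Fin J → ℕ, (∑ i, b i) = J →
      c * (2 * Real.log 2) ^ J /
          (∑ i : Fin J,
            (2 : ℝ) ^
              (((∑ j ∈ Finset.univ.filter fun j : Fin J => j ≤ i, b j : ℕ) : ℝ) -
                ((i : ℕ) + 1))) ≤
        ∑ d ∈ Dset J b,
          ((LstarD J b d).card : ℝ) / ∏ i : Fin J, ∏ t : Fin (b i), (d i t : ℝ) := by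
  refine ⟨log 2 / 2, by positivity, fun J hJ b hb => ?_⟩
  set ℓ : (i : Fin J) × Fin (b i) → ℕ := fun p => p.1
  set W := ∑ i : Fin J, (2 : ℝ) ^
    (((∑ j ∈ Finset.univ.filter fun j : Fin J => j ≤ i, b j : ℕ) : ℝ) - ((i : ℕ) + 1))
  have hW : 0 < W := sum_pos (fun i _ => rpow_pos_of_pos two_pos _) ⟨⟨0, hJ⟩, mem_univ _⟩
  have hcard : Fintype.card ((i : Fin J) × Fin (b i)) = J := by simp [hb]
  have hH : log 2 ^ J ≤ ∏ p, dyadicHarmonicSum (ℓ p) := by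
    calc log 2 ^ J = ∏ _p : (i : Fin J) × Fin (b i), log 2 := by simp [hcard]
      _ ≤ _ := prod_le_prod (fun _ _ => (log_pos one_lt_two).le)
          fun p _ => log_two_le_dyadicHarmonicSum _
  have hS : ∑ C : Finset ((i : Fin J) × Fin (b i)), ((2 : ℝ) ^ C.sup ℓ)⁻¹ ≤ 2 * W := by
    refine (sum_inv_two_pow_sup_le ℓ hJ fun p => p.1.2).trans_eq ?_
    rw [← Fin.sum_univ_eq_sum_range (fun i => (2 : ℝ) ^ #{p | ℓ p ≤ i} / 2 ^ i), mul_sum]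
    simp only [ℓ, card_filter_fst_le, two_pow_div_two_pow_eq_two_mul_rpow]
  have key := two_pow_card_mul_prod_mul_log_two_le ℓ
  rw [hcard] at key
  rw [sum_Dset_eq_sum_dyadicBox, div_le_iff₀ hW]
  calc log 2 / 2 * (2 * log 2) ^ J = 2 ^ J * log 2 ^ J * log 2 / 2 := by ring
    _ ≤ 2 ^ J * (∏ p, dyadicHarmonicSum (ℓ p)) * log 2 / 2 := by gcongr
    _ ≤ _ * (2 * W) / 2 := by grw [key, hS]
    _ = _ := by ring
end
end

section
/- Let J be a positive integer and let x_1,…,x_J be positive real numbers with x_1 ⋯ x_J = 1. Then, reading indices modulo J, Σ_{t=1}^J 1 / ( Σ_{i=1}^J x_{t+1} x_{t+2} ⋯ x_{t+i} ) = 1. Equivalently, the average over the J cyclic permutations of (x_1,…,x_J) of the quantity ( Σ_{i=1}^J x_1 ⋯ x_i )^{-1} is exactly 1/J. -/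
/-!
Write `P n = y 0 * ⋯ * y (n - 1)` for the periodic extension `y` of `x`. Since a full period
multiplies to `1`, `P` is itself `J`-periodic, so the `t`-th denominator is
`P (t + 2) / P (t + 1) + ⋯ + P (t + J + 1) / P (t + 1) = T / P (t + 1)` with
`T = P 0 + ⋯ + P (J - 1)`, and the reciprocals add up to `(P 1 + ⋯ + P J) / T = 1`.
-/

open Finset Function

@[to_additive]
theorem Function.Periodic.prod_range_shift {M : Type*} [CommMonoid M] {f : ℕ → M} {n : ℕ}
    (hf : Periodic f n) (c : ℕ) : ∏ i ∈ range n, f (c + i) = ∏ i ∈ range n, f i :=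
  calc ∏ i ∈ range n, f (c + i) = ∏ i ∈ Ico c (c + n), f i := by
        rw [prod_Ico_eq_prod_range, Nat.add_sub_cancel_left]
    _ = ∏ i ∈ Ico c (c + n), f (i % n) := prod_congr rfl fun i _ => (hf.map_mod_nat i).symm
    _ = ∏ i ∈ range n, f i := by
      rw [← Nat.image_Ico_mod c n, prod_image (Nat.mod_injOn_Ico c n)]

theorem Function.Periodic.prod_range_of_prod_eq_one {M : Type*} [CommMonoid M] {f : ℕ → M}
    {n : ℕ} (hf : Periodic f n) (hprod : ∏ i ∈ range n, f i = 1) :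
    Periodic (fun m => ∏ i ∈ range m, f i) n := fun m => by
  simp only [prod_range_add, hf.prod_range_shift, hprod, mul_one]

theorem Function.Periodic.ne_zero_of_prod_eq_one {M₀ : Type*} [CommMonoidWithZero M₀]
    [Nontrivial M₀] {f : ℕ → M₀} {n : ℕ} (hf : Periodic f n) (hn : 0 < n)
    (hprod : ∏ i ∈ range n, f i = 1) (m : ℕ) : f m ≠ 0 := fun h => by
  rw [← hf.map_mod_nat] at h
  simpa [hprod] using prod_eq_zero (mem_range.2 (Nat.mod_lt m hn)) h

theorem Function.Periodic.sum_inv_sum_cyclic_prod_eq_one {K : Type*} [Field K] {y : ℕ → K}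
    {J : ℕ} (hy : Periodic y J) (hprod : ∏ i ∈ range J, y i = 1)
    (hT : ∑ i ∈ range J, ∏ l ∈ range i, y l ≠ 0) :
    ∑ t ∈ range J, (∑ i ∈ range J, ∏ l ∈ range (i + 1), y (t + (l + 1)))⁻¹ = 1 := by
  set P : ℕ → K := fun n => ∏ l ∈ range n, y l
  set T := ∑ i ∈ range J, P i
  have hP : Periodic P J := hy.prod_range_of_prod_eq_one hprod
  have hJ : 0 < J := Nat.pos_of_ne_zero (by rintro rfl; simp [T] at hT)
  have hP0 (n : ℕ) : P n ≠ 0 :=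
    prod_ne_zero_iff.2 fun l _ => hy.ne_zero_of_prod_eq_one hJ hprod l
  have hdenom (t : ℕ) :
      ∑ i ∈ range J, ∏ l ∈ range (i + 1), y (t + (l + 1)) = T / P (t + 1) := by
    refine eq_div_of_mul_eq (hP0 _) ?_
    rw [sum_mul]
    calc ∑ i ∈ range J, (∏ l ∈ range (i + 1), y (t + (l + 1))) * P (t + 1)
        = ∑ i ∈ range J, P (t + 2 + i) := sum_congr rfl fun i _ => by
          rw [mul_comm, show t + 2 + i = t + 1 + (i + 1) by omega]
          simp only [P, prod_range_add y (t + 1) (i + 1)]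
          exact congrArg _ (prod_congr rfl fun l _ => by rw [add_assoc, add_comm 1])
      _ = T := hP.sum_range_shift _
  calc ∑ t ∈ range J, (∑ i ∈ range J, ∏ l ∈ range (i + 1), y (t + (l + 1)))⁻¹
      = (∑ t ∈ range J, P (1 + t)) / T := by
        simp only [hdenom, inv_div, sum_div, add_comm 1]
    _ = 1 := by rw [hP.sum_range_shift, div_self hT]

theorem cycle_lemma (J : ℕ) (hJ : 0 < J) (x : Fin J → ℝ)
    (hx : ∀ i, 0 < x i) (hprod : ∏ i, x i = 1) :
    ∑ t : Fin J,
        (∑ i ∈ Finset.range J,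
          ∏ l ∈ Finset.range (i + 1), x ⟨((t : ℕ) + (l + 1)) % J, Nat.mod_lt _ hJ⟩)⁻¹ = 1 := by
  set y : ℕ → ℝ := fun n => x ⟨n % J, Nat.mod_lt _ hJ⟩
  have hy : Periodic y J := fun n => by simp only [y, Nat.add_mod_right]
  have hy_prod : ∏ i ∈ range J, y i = 1 := by
    rw [← Fin.prod_univ_eq_prod_range, ← hprod]
    exact prod_congr rfl fun i _ => congrArg x (Fin.ext (Nat.mod_eq_of_lt i.2))
  have hT : 0 < ∑ i ∈ range J, ∏ l ∈ range i, y l :=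
    sum_pos (fun i _ => prod_pos fun l _ => hx _) (nonempty_range_iff.2 hJ.ne')
  exact (Fin.sum_univ_eq_sum_range
    (fun t => (∑ i ∈ range J, ∏ l ∈ range (i + 1), y (t + (l + 1)))⁻¹) J).trans
    (hy.sum_inv_sum_cyclic_prod_eq_one hy_prod hT.ne')
end

section
/- There is an absolute constant C > 0 such that for all positive integers r and k, Σ_{a_1,…,a_r = 1}^{k} |𝓛*(a)| / (a_1 ⋯ a_r) ≤ C · (2 h_k)^r · r! · ∫_{Ω_r} min_{0 ≤ j ≤ r} 2^{-j} ( k^{ξ_1} + k^{ξ_2} + … + k^{ξ_j} + 1 ) dξ, where h_k = 1 + 1/2 + … + 1/k is the k-th harmonic number and Ω_r = { (ξ_1,…,ξ_r) ∈ ℝ^r : 0 ≤ ξ_1 ≤ ξ_2 ≤ … ≤ ξ_r ≤ 1 } (with Lebesgue measure). -/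
open scoped BigOperators
open MeasureTheory

noncomputable section

/-- The `k`-th harmonicNum number `h_k = 1 + 1/2 + ⋯ + 1/k`. -/
def harmonicNum (k : ℕ) : ℝ := ∑ i ∈ Finset.range k, (1 : ℝ) / (i + 1)

/-- The simplex `Ω_r = { ξ ∈ ℝ^r : 0 ≤ ξ₁ ≤ ξ₂ ≤ ⋯ ≤ ξ_r ≤ 1 }`. -/
def Omega (r : ℕ) : Set (Fin r → ℝ) :=
  {ξ | (∀ i, 0 ≤ ξ i ∧ ξ i ≤ 1) ∧ Monotone ξ}


/-!
Fix the subset `S` minimising `2^{-|S|} (Σ_{i ∈ S} a_i + 1)`. Every subset sum is its part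
inside `S` (at most `Σ_{i ∈ S} a_i + 1` values) plus a subset sum of the complement (at most
`2^{r - |S|}` values), so `|𝓛*(a)| ≤ 2^r · min_S 2^{-|S|} (Σ_{i ∈ S} a_i + 1)`.

Writing `1 / a_i = h_k · |[h_{a_i - 1} / h_k, h_{a_i} / h_k)|` turns the sum over `a` into
`(2 h_k)^r` times an integral over disjoint boxes tiling `[0, 1)^r`. On the box of `a` we have
`a_i ≤ 3 k^{ξ_i}`, since `log a_i ≤ h_{a_i - 1}` and `h_k ≤ 1 + log k`. The resulting integrand
`min_S 2^{-|S|} (Σ_{i ∈ S} k^{ξ_i} + 1)` is symmetric in `ξ`, so its integral over the cube is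
at most `r!` times its integral over `Ω_r`; restricting `S` to initial segments only increases it.
-/

open Finset
open scoped Nat ENNReal

section Harmonic

lemma harmonicNum_eq_harmonic (n : ℕ) : harmonicNum n = harmonic n := by
  simp [harmonicNum, harmonic]

lemma harmonicNum_pos {n : ℕ} (hn : n ≠ 0) : 0 < harmonicNum n := by
  rw [harmonicNum_eq_harmonic]
  exact_mod_cast harmonic_pos hn

lemma harmonicNum_succ (n : ℕ) : harmonicNum (n + 1) = harmonicNum n + ((n : ℝ) + 1)⁻¹ := by
  simp [harmonicNum, sum_range_succ]

lemma monotone_harmonicNum : Monotone harmonicNum := fun _ _ h =>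
  sum_le_sum_of_subset_of_nonneg (range_subset_range.2 h) fun _ _ _ => by positivity

lemma add_one_le_three_mul_rpow {m k : ℕ} (hmk : m < k) {ξ : ℝ}
    (hξ : harmonicNum m / harmonicNum k ≤ ξ) : (m : ℝ) + 1 ≤ 3 * (k : ℝ) ^ ξ := by
  have hk : (0 : ℝ) < k := Nat.cast_pos.2 (by omega)
  have hH := harmonicNum_pos (by omega : k ≠ 0)
  set L := Real.log k
  set u := Real.log ((m : ℝ) + 1)
  have hu : u ≤ harmonicNum m := by
    simpa [harmonicNum_eq_harmonic, u] using log_add_one_le_harmonic m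
  have huL : u ≤ L := Real.log_le_log (by positivity) (by exact_mod_cast hmk)
  have hu0 : 0 ≤ u := Real.log_nonneg (by simp)
  have hHL : harmonicNum k ≤ 1 + L := by
    simpa [harmonicNum_eq_harmonic] using harmonic_le_one_add_log k
  have hmH : harmonicNum m ≤ harmonicNum k := monotone_harmonicNum hmk.le
  have hexp : u - 1 ≤ L * ξ := by
    have : (u - 1) * harmonicNum k ≤ L * harmonicNum m := by nlinarith
    calc u - 1 ≤ L * (harmonicNum m / harmonicNum k) := by
          rw [mul_div_assoc', le_div_iff₀ hH]; exact this
      _ ≤ L * ξ := mul_le_mul_of_nonneg_left hξ (huL.trans' hu0)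
  calc (m : ℝ) + 1 = Real.exp u := (Real.exp_log (by positivity)).symm
    _ ≤ Real.exp (1 + L * ξ) := Real.exp_le_exp.2 (by linarith)
    _ = Real.exp 1 * (k : ℝ) ^ ξ := by rw [Real.exp_add, Real.rpow_def_of_pos hk]
    _ ≤ 3 * (k : ℝ) ^ ξ := by
        gcongr
        exact (Real.exp_one_lt_d9.trans (by norm_num)).le

end Harmonic

section SubsetWeight

variable {ι : Type*}

def subsetWeight (x : ι → ℝ) (S : Finset ι) : ℝ := (2 ^ #S)⁻¹ * (∑ i ∈ S, x i + 1)

lemma subsetWeight_comp_equiv (x : ι → ℝ) (σ : ι ≃ ι) (S : Finset ι) :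
    subsetWeight (x ∘ σ) S = subsetWeight x (S.map σ.toEmbedding) := by
  simp [subsetWeight]

variable [Fintype ι]

def minSubsetWeight (x : ι → ℝ) : ℝ := univ.inf' univ_nonempty (subsetWeight x)

lemma minSubsetWeight_le (x : ι → ℝ) (S : Finset ι) : minSubsetWeight x ≤ subsetWeight x S :=
  inf'_le _ (mem_univ S)

lemma minSubsetWeight_nonneg {x : ι → ℝ} (hx : 0 ≤ x) : 0 ≤ minSubsetWeight x :=
  le_inf' _ _ fun S _ => by
    have := sum_nonneg fun i (_ : i ∈ S) => hx i
    unfold subsetWeight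
    positivity

lemma minSubsetWeight_le_mul {x y : ι → ℝ} {c : ℝ} (hc : 1 ≤ c) (hxy : ∀ i, x i ≤ c * y i) :
    minSubsetWeight x ≤ c * minSubsetWeight y := by
  obtain ⟨S, -, hS⟩ := exists_mem_eq_inf' univ_nonempty (subsetWeight y)
  have hsum : ∑ i ∈ S, x i ≤ c * ∑ i ∈ S, y i := mul_sum S y c ▸ sum_le_sum fun i _ => hxy i
  calc minSubsetWeight x ≤ subsetWeight x S := minSubsetWeight_le x S
    _ ≤ c * subsetWeight y S := by
        unfold subsetWeight
        rw [mul_left_comm]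
        gcongr
        linarith
    _ = c * minSubsetWeight y := by rw [minSubsetWeight, hS]

lemma minSubsetWeight_comp_equiv (x : ι → ℝ) (σ : ι ≃ ι) :
    minSubsetWeight (x ∘ σ) = minSubsetWeight x := by
  have key (y : ι → ℝ) (τ : ι ≃ ι) : minSubsetWeight y ≤ minSubsetWeight (y ∘ τ) :=
    le_inf' _ _ fun S _ => subsetWeight_comp_equiv y τ S ▸ minSubsetWeight_le _ _
  refine le_antisymm ?_ (key x σ)
  simpa [Function.comp_assoc] using key (x ∘ σ) σ.symm

end SubsetWeight

section Lstar

lemma card_Lstar_le (r : ℕ) (a : Fin r → ℕ) (S : Finset (Fin r)) :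
    #(Lstar r a) ≤ 2 ^ (r - #S) * (∑ i ∈ S, a i + 1) := by
  classical
  have hsplit : Lstar r a ⊆ (range (∑ i ∈ S, a i + 1) ×ˢ Sᶜ.powerset).image
      fun p => p.1 + ∑ i ∈ p.2, a i := by
    simp only [Lstar, image_subset_iff, mem_univ, forall_const]
    intro I
    refine mem_image.2 ⟨(∑ i ∈ I ∩ S, a i, I \ S), ?_, sum_inter_add_sum_sdiff I S a⟩
    simp only [mem_product, mem_range, mem_powerset, Nat.lt_succ_iff]
    exact ⟨sum_le_sum_of_subset inter_subset_right, fun i hi => by simp [(mem_sdiff.1 hi).2]⟩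
  calc #(Lstar r a) ≤ #(range (∑ i ∈ S, a i + 1) ×ˢ Sᶜ.powerset) :=
        (card_le_card hsplit).trans card_image_le
    _ = 2 ^ (r - #S) * (∑ i ∈ S, a i + 1) := by
        rw [card_product, card_range, card_powerset, card_compl, Fintype.card_fin, mul_comm]

lemma card_Lstar_le_two_pow_mul_minSubsetWeight (r : ℕ) (a : Fin r → ℕ) :
    (#(Lstar r a) : ℝ) ≤ 2 ^ r * minSubsetWeight fun i => (a i : ℝ) := by
  obtain ⟨S, -, hS⟩ := exists_mem_eq_inf' univ_nonempty (subsetWeight fun i => (a i : ℝ))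
  have hpow : (2 : ℝ) ^ (r - #S) = 2 ^ r * (2 ^ #S)⁻¹ :=
    pow_sub₀ 2 two_ne_zero (by simpa using card_le_univ S)
  calc (#(Lstar r a) : ℝ) ≤ 2 ^ (r - #S) * (∑ i ∈ S, (a i : ℝ) + 1) := by
        exact_mod_cast card_Lstar_le r a S
    _ = 2 ^ r * minSubsetWeight fun i => (a i : ℝ) := by
        rw [minSubsetWeight, hS, subsetWeight, hpow, mul_assoc]

end Lstar

section PrefixWeight

variable {r : ℕ}

def minPrefixWeight (x : Fin r → ℝ) : ℝ :=
  (range (r + 1)).inf' ⟨0, by simp⟩ fun j =>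
    ((2 : ℝ) ^ j)⁻¹ * ((∑ i ∈ univ.filter fun i : Fin r => (i : ℕ) < j, x i) + 1)

lemma minSubsetWeight_le_minPrefixWeight (x : Fin r → ℝ) :
    minSubsetWeight x ≤ minPrefixWeight x :=
  le_inf' _ _ fun j hj => by
    have hcard : #(univ.filter fun i : Fin r => (i : ℕ) < j) = j := by
      rw [Fin.card_filter_val_lt]
      exact min_eq_right (Nat.lt_succ_iff.1 (mem_range.1 hj))
    simpa [subsetWeight, hcard] using
      minSubsetWeight_le x (univ.filter fun i : Fin r => (i : ℕ) < j)

lemma continuous_minPrefixWeight : Continuous (minPrefixWeight : (Fin r → ℝ) → ℝ) :=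
  Continuous.finset_inf'_apply _ fun _ _ => by fun_prop

end PrefixWeight

section HarmonicBox

variable {ι : Type*}

-- `a i` stands for `a_i - 1`, so that the box has volume `∏ i, 1 / (a_i h_k)`.
def harmonicBox (k : ℕ) (a : ι → ℕ) : Set (ι → ℝ) :=
  Set.univ.pi fun i =>
    Set.Ico (harmonicNum (a i) / harmonicNum k) (harmonicNum (a i + 1) / harmonicNum k)

lemma pairwise_disjoint_harmonicBox {k : ℕ} (hk : k ≠ 0) :
    Pairwise fun a b : ι → ℕ => Disjoint (harmonicBox k a) (harmonicBox k b) := by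
  have hmono : Monotone fun m => harmonicNum m / harmonicNum k := fun _ _ h =>
    div_le_div_of_nonneg_right (monotone_harmonicNum h) (harmonicNum_pos hk).le
  intro a b hab
  obtain ⟨i, hi⟩ := Function.ne_iff.1 hab
  exact Set.disjoint_univ_pi.2 ⟨i, hmono.pairwise_disjoint_on_Ico_succ hi⟩

lemma harmonicBox_subset_unitCube {k : ℕ} {a : ι → ℕ} (ha : ∀ i, a i < k) :
    harmonicBox k a ⊆ Set.univ.pi fun _ => Set.Icc 0 1 := by
  intro ξ hξ i _
  obtain ⟨hlow, hupp⟩ := hξ i trivial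
  have hH : 0 ≤ harmonicNum k := monotone_harmonicNum (Nat.zero_le k)
  refine ⟨le_trans ?_ hlow, hupp.le.trans (div_le_one_of_le₀ (monotone_harmonicNum (ha i)) hH)⟩
  exact div_nonneg (monotone_harmonicNum (Nat.zero_le _)) hH

variable [Fintype ι]

lemma measurableSet_harmonicBox (k : ℕ) (a : ι → ℕ) : MeasurableSet (harmonicBox k a) :=
  MeasurableSet.univ_pi fun _ => measurableSet_Ico

lemma measureReal_harmonicBox {k : ℕ} (hk : k ≠ 0) (a : ι → ℕ) :
    volume.real (harmonicBox k a) = ∏ i, (((a i : ℝ) + 1) * harmonicNum k)⁻¹ := by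
  have hH := harmonicNum_pos hk
  rw [measureReal_def, harmonicBox, volume_pi_pi, ENNReal.toReal_prod]
  refine prod_congr rfl fun i _ => ?_
  have hside : (harmonicNum (a i) + ((a i : ℝ) + 1)⁻¹) / harmonicNum k - harmonicNum (a i) /
      harmonicNum k = (((a i : ℝ) + 1) * harmonicNum k)⁻¹ := by
    field_simp
    ring
  rw [Real.volume_Ico, harmonicNum_succ, hside, ENNReal.toReal_ofReal (by positivity)]

lemma sum_minSubsetWeight_mul_volume_harmonicBox_le [DecidableEq ι] {k : ℕ} (hk : k ≠ 0) :
    ∑ a : ι → Fin k,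
        ENNReal.ofReal (minSubsetWeight fun i => ((a i : ℕ) : ℝ) + 1) *
          volume (harmonicBox k fun i => a i)
      ≤ 3 * ∫⁻ ξ in Set.univ.pi fun _ : ι => Set.Icc (0 : ℝ) 1,
          ENNReal.ofReal (minSubsetWeight fun i => (k : ℝ) ^ ξ i) := by
  set G := fun ξ : ι → ℝ => ENNReal.ofReal (minSubsetWeight fun i => (k : ℝ) ^ ξ i)
  have hbox (a : ι → Fin k) :
      ENNReal.ofReal (minSubsetWeight fun i => ((a i : ℕ) : ℝ) + 1) *
          volume (harmonicBox k fun i => a i) ≤ ∫⁻ ξ in harmonicBox k fun i => a i, 3 * G ξ := by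
    rw [← setLIntegral_const]
    refine setLIntegral_mono' (measurableSet_harmonicBox _ _) fun ξ hξ => ?_
    rw [← ENNReal.ofReal_ofNat 3, ← ENNReal.ofReal_mul (by norm_num)]
    exact ENNReal.ofReal_le_ofReal <| minSubsetWeight_le_mul (by norm_num) fun i =>
      add_one_le_three_mul_rpow (a i).2 (hξ i trivial).1
  have hdisj : Set.PairwiseDisjoint (Set.univ : Set (ι → Fin k))
      fun a => harmonicBox k fun i => a i :=
    ((pairwise_disjoint_harmonicBox hk).comp_of_injective fun a b h =>
      funext fun i => Fin.ext (congrFun h i)).set_pairwise _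
  calc _ ≤ ∑ a : ι → Fin k, ∫⁻ ξ in harmonicBox k fun i => a i, 3 * G ξ :=
        sum_le_sum fun a _ => hbox a
    _ = ∫⁻ ξ in ⋃ a ∈ (univ : Finset (ι → Fin k)), harmonicBox k fun i => a i, 3 * G ξ :=
        (lintegral_biUnion_finset (hdisj.subset (by simp))
          (fun a _ => measurableSet_harmonicBox _ _) _).symm
    _ ≤ ∫⁻ ξ in Set.univ.pi fun _ => Set.Icc 0 1, 3 * G ξ :=
        lintegral_mono_set <| Set.iUnion₂_subset fun a _ =>
          harmonicBox_subset_unitCube fun i => (a i).2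
    _ = 3 * ∫⁻ ξ in Set.univ.pi fun _ => Set.Icc 0 1, G ξ := lintegral_const_mul' _ _ (by simp)

end HarmonicBox

section Symmetrization

variable {r : ℕ}

lemma Omega_subset_unitCube : Omega r ⊆ Set.univ.pi fun _ => Set.Icc 0 1 :=
  fun _ hξ i _ => hξ.1 i

lemma unitCube_subset_iUnion_preimage_Omega :
    (Set.univ.pi fun _ : Fin r => Set.Icc (0 : ℝ) 1) ⊆
      ⋃ σ : Equiv.Perm (Fin r), (fun ξ => ξ ∘ σ) ⁻¹' Omega r :=
  fun ξ hξ => Set.mem_iUnion.2 ⟨Tuple.sort ξ, fun _ => hξ _ trivial, Tuple.monotone_sort ξ⟩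

lemma lintegral_unitCube_le_factorial_mul {f : (Fin r → ℝ) → ℝ≥0∞}
    (hf : ∀ (σ : Equiv.Perm (Fin r)) ξ, f (ξ ∘ σ) = f ξ) :
    ∫⁻ ξ in Set.univ.pi fun _ => Set.Icc 0 1, f ξ ≤ r ! * ∫⁻ ξ in Omega r, f ξ := by
  have hpre (σ : Equiv.Perm (Fin r)) :
      ∫⁻ ξ in (fun ξ => ξ ∘ σ) ⁻¹' Omega r, f ξ = ∫⁻ ξ in Omega r, f ξ := by
    have : ∫⁻ ξ in (fun ξ => ξ ∘ σ) ⁻¹' Omega r, f (ξ ∘ σ) = ∫⁻ ξ in Omega r, f ξ :=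
      (volume_measurePreserving_piCongrLeft (fun _ => ℝ) σ).symm.setLIntegral_comp_preimage_emb
        (MeasurableEquiv.piCongrLeft (fun _ => ℝ) σ).symm.measurableEmbedding f (Omega r)
    simpa only [hf] using this
  calc _ ≤ ∫⁻ ξ in ⋃ σ : Equiv.Perm (Fin r), (fun ξ => ξ ∘ σ) ⁻¹' Omega r, f ξ :=
        lintegral_mono_set unitCube_subset_iUnion_preimage_Omega
    _ ≤ ∑' σ : Equiv.Perm (Fin r), ∫⁻ ξ in (fun ξ => ξ ∘ σ) ⁻¹' Omega r, f ξ :=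
        lintegral_iUnion_le _ _
    _ = r ! * ∫⁻ ξ in Omega r, f ξ := by
        simp only [tsum_fintype, hpre, sum_const, card_univ, Fintype.card_perm, Fintype.card_fin,
          nsmul_eq_mul]

end Symmetrization

lemma integrableOn_minPrefixWeight_rpow {r k : ℕ} (hk : k ≠ 0) :
    IntegrableOn (fun ξ : Fin r → ℝ => minPrefixWeight fun i => (k : ℝ) ^ ξ i) (Omega r) := by
  have hcont : Continuous fun ξ : Fin r → ℝ => fun i => (k : ℝ) ^ ξ i :=
    continuous_pi fun i =>
      (Real.continuous_const_rpow (by exact_mod_cast hk)).comp (continuous_apply i)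
  exact ((continuous_minPrefixWeight.comp hcont).continuousOn.integrableOn_compact
    (isCompact_univ_pi fun _ => isCompact_Icc)).mono_set Omega_subset_unitCube

lemma sum_minSubsetWeight_mul_measureReal_harmonicBox_le {r k : ℕ} (hk : k ≠ 0) :
    ∑ a : Fin r → Fin k,
        (minSubsetWeight fun i => ((a i : ℕ) : ℝ) + 1) * volume.real (harmonicBox k fun i => a i)
      ≤ 3 * r ! * ∫ ξ in Omega r, minPrefixWeight fun i => (k : ℝ) ^ ξ i := by
  have hprefix_int := integrableOn_minPrefixWeight_rpow (r := r) hk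
  have hmin_le_prefix (ξ : Fin r → ℝ) := minSubsetWeight_le_minPrefixWeight fun i => (k : ℝ) ^ ξ i
  have hprefix_nonneg (ξ : Fin r → ℝ) : 0 ≤ minPrefixWeight fun i => (k : ℝ) ^ ξ i :=
    (minSubsetWeight_nonneg fun i => by positivity).trans (hmin_le_prefix ξ)
  have hm_nonneg (a : Fin r → Fin k) : 0 ≤ minSubsetWeight fun i => ((a i : ℕ) : ℝ) + 1 :=
    minSubsetWeight_nonneg fun i => by positivity
  have hbox_finite (a : Fin r → Fin k) : volume (harmonicBox k fun i => (a i : ℕ)) ≠ ∞ :=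
    ((measure_mono (harmonicBox_subset_unitCube fun i => (a i).2)).trans_lt
      (isCompact_univ_pi fun _ => isCompact_Icc).measure_lt_top).ne
  have key : ∑ a : Fin r → Fin k, ENNReal.ofReal
        ((minSubsetWeight fun i => ((a i : ℕ) : ℝ) + 1) * volume.real (harmonicBox k fun i => a i))
      ≤ ENNReal.ofReal (3 * r ! * ∫ ξ in Omega r, minPrefixWeight fun i => (k : ℝ) ^ ξ i) :=
    calc _ = ∑ a : Fin r → Fin k, ENNReal.ofReal (minSubsetWeight fun i => ((a i : ℕ) : ℝ) + 1) *
          volume (harmonicBox k fun i => a i) := by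
          simp only [ENNReal.ofReal_mul (hm_nonneg _), ofReal_measureReal (hbox_finite _)]
      _ ≤ 3 * ∫⁻ ξ in Set.univ.pi fun _ => Set.Icc 0 1,
            ENNReal.ofReal (minSubsetWeight fun i => (k : ℝ) ^ ξ i) :=
          sum_minSubsetWeight_mul_volume_harmonicBox_le hk
      _ ≤ 3 * (r ! * ∫⁻ ξ in Omega r, ENNReal.ofReal (minSubsetWeight fun i => (k : ℝ) ^ ξ i)) := by
          gcongr
          exact lintegral_unitCube_le_factorial_mul fun σ ξ => by
            rw [← minSubsetWeight_comp_equiv (fun i => (k : ℝ) ^ ξ i) σ]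
            rfl
      _ ≤ 3 * (r ! * ∫⁻ ξ in Omega r, ENNReal.ofReal (minPrefixWeight fun i => (k : ℝ) ^ ξ i)) := by
          gcongr with ξ
          exact hmin_le_prefix ξ
      _ = _ := by
          rw [← ofReal_integral_eq_lintegral_ofReal hprefix_int (ae_of_all _ hprefix_nonneg),
            ENNReal.ofReal_mul (by positivity), ENNReal.ofReal_mul (by positivity),
            ENNReal.ofReal_natCast, ENNReal.ofReal_ofNat, mul_assoc]
  rw [← ENNReal.ofReal_sum_of_nonneg fun a _ => mul_nonneg (hm_nonneg a) measureReal_nonneg] at key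
  have hI : 0 ≤ ∫ ξ in Omega r, minPrefixWeight fun i => (k : ℝ) ^ ξ i :=
    integral_nonneg hprefix_nonneg
  exact (ENNReal.ofReal_le_ofReal_iff (by positivity)).1 key

lemma card_Lstar_div_prod_le {r k : ℕ} (hk : k ≠ 0) (a : Fin r → ℕ) :
    ((Lstar r fun i => a i + 1).card : ℝ) / ∏ i, ((a i : ℝ) + 1) ≤
      (2 * harmonicNum k) ^ r *
        ((minSubsetWeight fun i => (a i : ℝ) + 1) * volume.real (harmonicBox k a)) := by
  have hH := (harmonicNum_pos hk).ne'
  have hprod : ∏ i, ((a i : ℝ) + 1) ≠ 0 := prod_ne_zero_iff.2 fun i _ => by positivity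
  have hcard := card_Lstar_le_two_pow_mul_minSubsetWeight r fun i => a i + 1
  push_cast at hcard
  rw [measureReal_harmonicBox hk, prod_inv_distrib, prod_mul_distrib, prod_const, card_univ,
    Fintype.card_fin]
  calc _ ≤ 2 ^ r * (minSubsetWeight fun i => (a i : ℝ) + 1) / ∏ i, ((a i : ℝ) + 1) := by
        gcongr
    _ = _ := by
        field_simp
        ring

theorem sum_Lstar_le_integral :
    ∃ C : ℝ, 0 < C ∧ ∀ (r k : ℕ), 1 ≤ r → 1 ≤ k →
      (∑ a : Fin r → Fin k,
          ((Lstar r fun i => (a i : ℕ) + 1).card : ℝ) / ∏ i : Fin r, ((a i : ℕ) + 1 : ℝ)) ≤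
        C * (2 * harmonicNum k) ^ r * (Nat.factorial r : ℝ) *
          ∫ ξ in Omega r,
            (Finset.range (r + 1)).inf' ⟨0, by simp⟩
              (fun j => ((2 : ℝ) ^ j)⁻¹ *
                ((∑ i ∈ Finset.univ.filter fun i : Fin r => (i : ℕ) < j,
                    (k : ℝ) ^ (ξ i)) + 1)) := by
  refine ⟨3, by norm_num, fun r k _ hk => ?_⟩
  have hk0 : k ≠ 0 := Nat.one_le_iff_ne_zero.1 hk
  have hH := (harmonicNum_pos hk0).le
  calc _ ≤ ∑ a : Fin r → Fin k, (2 * harmonicNum k) ^ r *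
          ((minSubsetWeight fun i => ((a i : ℕ) : ℝ) + 1) *
            volume.real (harmonicBox k fun i => a i)) :=
        sum_le_sum fun a _ => card_Lstar_div_prod_le hk0 fun i => a i
    _ = (2 * harmonicNum k) ^ r * ∑ a : Fin r → Fin k,
          (minSubsetWeight fun i => ((a i : ℕ) : ℝ) + 1) *
            volume.real (harmonicBox k fun i => a i) := (mul_sum _ _ _).symm
    _ ≤ (2 * harmonicNum k) ^ r *
          (3 * r ! * ∫ ξ in Omega r, minPrefixWeight fun i => (k : ℝ) ^ ξ i) := by
        gcongr
        exact sum_minSubsetWeight_mul_measureReal_harmonicBox_le hk0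
    _ = _ := by
        unfold minPrefixWeight
        ring
end
end
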